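/- arXiv:2105.10031 — 4 statements merged into one kernel-verified Lean document; each statement's English description precedes it below -/
import Mathlib

section
/- Let G = (X, M) be a hypergraph and let G̃ be the hypergraph obtained from G by adding, for each edge E ∈ M, two new vertices to E (the added vertices being pairwise distinct for distinct edges and disjoint from X). Then: (1) every automorphism of G̃ that maps X to X restricts to an automorphism of G, and (2) every automorphism of G extends to an automorphism of G̃. -/
/-- An automorphism of a hypergraph `(X, M)`: a permutation of the ambient type that
fixes every vertex outside `X` (so it is essentially a permutation of `X`) and
preserves the edge set `M`. -/
def IsAuto {V : Type*} [DecidableEq V] (X : Finset V) (M : Finset (Finset V))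
    (σ : Equiv.Perm V) : Prop :=
  (∀ v ∉ X, σ v = v) ∧ ∀ E : Finset V, E ∈ M ↔ E.image σ ∈ M

/-- Vertex set of the hypergraph G̃ obtained from (X, M) by adding two fresh
vertices `Sum.inr (E, 0)`, `Sum.inr (E, 1)` for each edge E ∈ M. -/
def tildeVerts {V : Type*} [DecidableEq V] (X : Finset V) (M : Finset (Finset V)) :
    Finset (V ⊕ (Finset V × Fin 2)) :=
  X.image Sum.inl ∪ M.biUnion (fun E => {Sum.inr (E, 0), Sum.inr (E, 1)})

/-- Edge set of the hypergraph G̃: each edge E ∈ M is enlarged by its two fresh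
vertices. -/
def tildeEdges {V : Type*} [DecidableEq V] (M : Finset (Finset V)) :
    Finset (Finset (V ⊕ (Finset V × Fin 2))) :=
  M.image (fun E => E.image Sum.inl ∪ {Sum.inr (E, 0), Sum.inr (E, 1)})

/-!
An automorphism τ of G̃ that maps `X` to itself permutes the remaining vertices too, so on
each enlarged edge `E ∪ {e¹_E, e²_E}` its original part is sent to the original part of the
image edge: reading off original parts shows that `τ|_X` maps edges of G to edges of G.
Conversely an automorphism σ of G extends by sending `eⁱ_E` to `eⁱ_{σ(E)}`. In both directions
only one inclusion has to be checked, since an injective self-map of the finite edge set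
is onto.
-/

open Equiv Function Sum Finset

section General

variable {α β : Type*}

lemma isAuto_of_image_mem [DecidableEq α] {S : Finset α} {N : Finset (Finset α)}
    {τ : Perm α} (hfix : ∀ v ∉ S, τ v = v) (hN : ∀ E ∈ N, E.image τ ∈ N) :
    IsAuto S N τ := by
  refine ⟨hfix, fun E => ⟨hN E, fun hE => ?_⟩⟩
  have hbij : Set.BijOn (Finset.image τ) N N :=
    (N.finite_toSet.injOn_iff_bijOn_of_mapsTo hN).mp (image_injective τ.injective).injOn
  obtain ⟨F, hF, hFE⟩ := hbij.surjOn hE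
  rwa [← image_injective τ.injective hFE]

lemma exists_perm_apply_inl {X : Finset α} {τ : Perm (α ⊕ β)}
    (hX : ∀ v ∈ X, ∃ w ∈ X, τ (inl v) = inl w) (hout : ∀ v ∉ X, τ (inl v) = inl v) :
    ∃ σ : Perm α, ∀ v, τ (inl v) = inl (σ v) := by
  have : ∀ v, ∃ w, τ (inl v) = inl w ∧ (v ∈ X → w ∈ X) := by
    intro v
    by_cases hv : v ∈ X
    · obtain ⟨w, hw, h⟩ := hX v hv
      exact ⟨w, h, fun _ => hw⟩
    · exact ⟨v, hout v hv, (absurd · hv)⟩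
  choose s hs hsX using this
  have hinj : Injective s := fun a b h => inl_injective (τ.injective (by rw [hs, hs, h]))
  have hsurj : Surjective s := by
    intro w
    by_cases hw : w ∈ X
    · obtain ⟨v, -, hv⟩ :=
        ((X.finite_toSet.injOn_iff_bijOn_of_mapsTo hsX).mp hinj.injOn).surjOn hw
      exact ⟨v, hv⟩
    · exact ⟨w, inl_injective ((hs w).symm.trans (hout w hw))⟩
  exact ⟨Equiv.ofBijective s ⟨hinj, hsurj⟩, hs⟩

lemma toLeft_image_of_apply_inl [DecidableEq α] [DecidableEq β] {τ : Perm (α ⊕ β)}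
    {σ : Perm α} (h : ∀ v, τ (inl v) = inl (σ v)) (u : Finset (α ⊕ β)) :
    (u.image τ).toLeft = u.toLeft.image σ := by
  ext w
  simp only [mem_toLeft, mem_image]
  constructor
  · rintro ⟨x | b, hx, hxw⟩
    · exact ⟨x, hx, inl_injective ((h x).symm.trans hxw)⟩
    · have : τ (inr b) = τ (inl (σ.symm w)) := by rw [hxw, h, apply_symm_apply]
      exact absurd (τ.injective this) inr_ne_inl
  · rintro ⟨v, hv, rfl⟩
    exact ⟨inl v, hv, h v⟩

lemma image_sumCongr_disjSum [DecidableEq α] [DecidableEq β] (σ : Perm α) (ρ : Perm β)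
    (s : Finset α) (t : Finset β) :
    (s.disjSum t).image (Equiv.sumCongr σ ρ) = (s.image σ).disjSum (t.image ρ) := by
  ext (x | y) <;> simp

end General

section Tilde

variable {V : Type*} [DecidableEq V]

def enlarge (E : Finset V) : Finset (V ⊕ (Finset V × Fin 2)) :=
  E.disjSum ({E} ×ˢ univ)

lemma tildeEdges_eq_image_enlarge (M : Finset (Finset V)) :
    tildeEdges M = M.image enlarge := by
  refine image_congr fun E _ => ?_
  ext (x | ⟨F, i⟩)
  · simp [enlarge]
  · fin_cases i <;> simp [enlarge, eq_comm]

lemma IsAuto.restrict {X : Finset V} {M : Finset (Finset V)}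
    {τ : Perm (V ⊕ (Finset V × Fin 2))} (hτ : IsAuto (tildeVerts X M) (tildeEdges M) τ)
    {σ : Perm V} (hσ : ∀ v, τ (inl v) = inl (σ v)) : IsAuto X M σ := by
  refine isAuto_of_image_mem (fun v hv => ?_) fun E hE => ?_
  · apply inl_injective (β := Finset V × Fin 2)
    rw [← hσ]
    exact hτ.1 _ (by simp [tildeVerts, hv])
  · rw [tildeEdges_eq_image_enlarge] at hτ
    obtain ⟨F, hF, hFE⟩ := mem_image.mp ((hτ.2 (enlarge E)).mp (mem_image_of_mem _ hE))
    have : F = E.image σ := by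
      simpa [enlarge, toLeft_image_of_apply_inl hσ] using congrArg toLeft hFE
    exact this ▸ hF

lemma IsAuto.exists_extension {X : Finset V} {M : Finset (Finset V)} {σ : Perm V}
    (hσ : IsAuto X M σ) : ∃ τ : Perm (V ⊕ (Finset V × Fin 2)),
      IsAuto (tildeVerts X M) (tildeEdges M) τ ∧ ∀ v, τ (inl v) = inl (σ v) := by
  have hM : ∀ E, σ.finsetCongr E ∈ M ↔ E ∈ M := fun E => by
    simpa [map_eq_image] using (hσ.2 E).symm
  -- relabels the fresh vertices of edges only: those labelled by a non-edge lie outside G̃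
  let ρ : Perm (Finset V) := Perm.ofSubtype (Perm.subtypePerm σ.finsetCongr hM)
  have hρM : ∀ E ∈ M, ρ E = E.image σ := fun E hE => by
    simp [ρ, Perm.ofSubtype_apply_of_mem _ hE, map_eq_image]
  have hρ : ∀ E ∉ M, ρ E = E := fun E hE => Perm.ofSubtype_apply_of_not_mem _ hE
  refine ⟨Equiv.sumCongr σ (Equiv.prodCongr ρ (Equiv.refl _)), ?_, fun _ => rfl⟩
  rw [tildeEdges_eq_image_enlarge]
  refine isAuto_of_image_mem ?_ fun E' hE' => ?_
  · rintro (v | ⟨E, i⟩) hv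
    · have hvX : v ∉ X := fun h => hv (by simp [tildeVerts, h])
      simp [hσ.1 v hvX]
    · have hE : E ∉ M := fun hE => hv (by fin_cases i <;> simp [tildeVerts, hE])
      simp [hρ E hE]
  · obtain ⟨E, hE, rfl⟩ := mem_image.mp hE'
    rw [enlarge, image_sumCongr_disjSum]
    refine mem_image.mpr ⟨E.image σ, (hσ.2 E).mp hE, ?_⟩
    ext (x | ⟨F, i⟩)
    · simp [enlarge]
    · fin_cases i <;> simp [enlarge, hρM E hE]

end Tilde

theorem stmt_16_general {V : Type} [DecidableEq V] (X : Finset V) (M : Finset (Finset V)) :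
    (∀ τ : Equiv.Perm (V ⊕ (Finset V × Fin 2)),
      IsAuto (tildeVerts X M) (tildeEdges M) τ →
      (∀ v ∈ X, ∃ w ∈ X, τ (Sum.inl v) = Sum.inl w) →
      ∃ σ : Equiv.Perm V, IsAuto X M σ ∧ ∀ v : V, τ (Sum.inl v) = Sum.inl (σ v)) ∧
    (∀ σ : Equiv.Perm V, IsAuto X M σ →
      ∃ τ : Equiv.Perm (V ⊕ (Finset V × Fin 2)),
        IsAuto (tildeVerts X M) (tildeEdges M) τ ∧
        ∀ v : V, τ (Sum.inl v) = Sum.inl (σ v)) := by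
  refine ⟨fun τ hτ hX => ?_, fun σ hσ => hσ.exists_extension⟩
  obtain ⟨σ, hσ⟩ := exists_perm_apply_inl hX fun v hv => hτ.1 _ (by simp [tildeVerts, hv])
  exact ⟨σ, hτ.restrict hσ, hσ⟩

/-- (1) Every automorphism of G̃ mapping the original vertex set X into itself
restricts to an automorphism of G = (X, M); (2) every automorphism of G extends
to an automorphism of G̃. -/
theorem stmt_16 {V : Type} [DecidableEq V] (X : Finset V) (M : Finset (Finset V))
    (hsub : ∀ E ∈ M, E ⊆ X) :
    (∀ τ : Equiv.Perm (V ⊕ (Finset V × Fin 2)),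
      IsAuto (tildeVerts X M) (tildeEdges M) τ →
      (∀ v ∈ X, ∃ w ∈ X, τ (Sum.inl v) = Sum.inl w) →
      ∃ σ : Equiv.Perm V, IsAuto X M σ ∧ ∀ v : V, τ (Sum.inl v) = Sum.inl (σ v)) ∧
    (∀ σ : Equiv.Perm V, IsAuto X M σ →
      ∃ τ : Equiv.Perm (V ⊕ (Finset V × Fin 2)),
        IsAuto (tildeVerts X M) (tildeEdges M) τ ∧
        ∀ v : V, τ (Sum.inl v) = Sum.inl (σ v)) :=
  stmt_16_general X M
end

section
/- For every integer k ≥ 3, if φ is an automorphism of G̃_k that leaves the set {v_1, v_{2k−2}, v_{2k−1}} invariant (i.e., φ maps this three-element set onto itself), then φ restricted to the vertices of G_k is the identity. -/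
/-- The vertex set of the k-graph `G_k`: vertices `v_1, …, v_{2k-1}` modeled as the
naturals `1, …, 2k-1`. -/
def GkVerts (k : ℕ) : Finset ℕ := Finset.Icc 1 (2 * k - 1)

/-- The edge set of the k-graph `G_k`: edges `M_i = {v_i, …, v_{i+k-1}}` for
`i ∈ {1, …, k}`. -/
def GkEdges (k : ℕ) : Finset (Finset ℕ) :=
  (Finset.Icc 1 k).image (fun i => Finset.Icc i (i + k - 1))

/-- The vertex set of `G*_k`: that of `G_k` together with the new vertex `x = 2k`. -/
def GstarVerts (k : ℕ) : Finset ℕ := insert (2 * k) (GkVerts k)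

/-- The edge set of `G*_k`: that of `G_k` together with the new edge
`{x, v_1, …, v_{k-2}, v_{k+2}}`. -/
def GstarEdges (k : ℕ) : Finset (Finset ℕ) :=
  insert (insert (2 * k) (insert (k + 2) (Finset.Icc 1 (k - 2)))) (GkEdges k)

/-! ### Auxiliary definitions and lemmas -/


def MiF (k i : ℕ) : Finset ℕ := Finset.Icc i (i + k - 1)

def tEF (k i : ℕ) : Finset (ℕ ⊕ (Finset ℕ × Fin 2)) :=
  (MiF k i).image Sum.inl ∪ {Sum.inr (MiF k i, 0), Sum.inr (MiF k i, 1)}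

lemma memtE_inl (k w i : ℕ) : Sum.inl w ∈ tEF k i ↔ i ≤ w ∧ w ≤ i + k - 1 := by
  simp [tEF, MiF]

lemma memtE_inr (k i : ℕ) (E : Finset ℕ) (b : Fin 2) :
    Sum.inr (E, b) ∈ tEF k i ↔ E = MiF k i := by
  constructor
  · intro h; simp [tEF] at h; tauto
  · rintro rfl; fin_cases b <;> simp [tEF]

lemma MiF_inj (k a b : ℕ) (hk : 1 ≤ k) (h : MiF k a = MiF k b) : a = b := by
  have ha : a ∈ MiF k a := by simp [MiF, Finset.mem_Icc]; omega
  have hb : b ∈ MiF k b := by simp [MiF, Finset.mem_Icc]; omega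
  rw [h] at ha; rw [← h] at hb
  simp [MiF, Finset.mem_Icc] at ha hb
  omega

lemma tEF_inj (k a b : ℕ) (hk : 1 ≤ k) (h : tEF k a = tEF k b) : a = b := by
  have hm : Sum.inr (MiF k a, (0 : Fin 2)) ∈ tEF k a := (memtE_inr k a _ _).2 rfl
  rw [h] at hm
  exact MiF_inj k a b hk ((memtE_inr k b _ _).1 hm)

lemma card_MiF_inter (k a b : ℕ) (hk : 1 ≤ k) (h1 : a ≤ b) (h2 : b ≤ a + k - 1) :
    (MiF k a ∩ MiF k b).card = a + k - b := by
  have : MiF k a ∩ MiF k b = Finset.Icc b (a + k - 1) := by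
    ext x
    simp [MiF, Finset.mem_inter, Finset.mem_Icc]
    omega
  rw [this, Nat.card_Icc]
  omega

lemma tE_inter (k a b : ℕ) (hk : 1 ≤ k) (hne : a ≠ b) :
    tEF k a ∩ tEF k b = (MiF k a ∩ MiF k b).image Sum.inl := by
  ext x
  rcases x with w | ⟨E, c⟩
  · simp [memtE_inl, MiF, Finset.mem_Icc, Finset.mem_inter, tEF]
  · simp only [Finset.mem_inter, memtE_inr]
    constructor
    · rintro ⟨rfl, h2⟩
      exact absurd (MiF_inj k a b hk h2) hne
    · intro h
      simp at h

lemma pattern_inj (k v w : ℕ) (hk : 3 ≤ k) (hv1 : 1 ≤ v) (hv2 : v ≤ 2*k-1)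
    (hw1 : 1 ≤ w) (hw2 : w ≤ 2*k-1)
    (H : ∀ i, 1 ≤ i → i ≤ k → ((i ≤ v ∧ v ≤ i + k - 1) ↔ (i ≤ w ∧ w ≤ i + k - 1))) :
    v = w := by
  have h1 := H (min v k) (by omega) (by omega)
  have h2 := H (min w k) (by omega) (by omega)
  have h3 := H (max 1 (v + 1 - k)) (by omega) (by omega)
  have h4 := H (max 1 (w + 1 - k)) (by omega) (by omega)
  omega

/-- For k ≥ 3, any automorphism of G̃_k leaving the set {v_1, v_{2k−2}, v_{2k−1}}
invariant is the identity on the vertices of G_k. -/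
theorem stmt_17 (k : ℕ) (hk : 3 ≤ k)
    (φ : Equiv.Perm (ℕ ⊕ (Finset ℕ × Fin 2)))
    (hauto : IsAuto (tildeVerts (GkVerts k) (GkEdges k)) (tildeEdges (GkEdges k)) φ)
    (hinv : ({Sum.inl 1, Sum.inl (2 * k - 2), Sum.inl (2 * k - 1)} :
        Finset (ℕ ⊕ (Finset ℕ × Fin 2))).image φ
      = {Sum.inl 1, Sum.inl (2 * k - 2), Sum.inl (2 * k - 1)}) :
    ∀ v ∈ GkVerts k, φ (Sum.inl v) = Sum.inl v := by
  obtain ⟨hfix, hedgeiff⟩ := hauto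
  -- characterize membership in tildeEdges
  have hmemTE : ∀ S, S ∈ tildeEdges (GkEdges k) ↔ ∃ j, 1 ≤ j ∧ j ≤ k ∧ S = tEF k j := by
    intro S
    simp only [tildeEdges, GkEdges, Finset.mem_image, Finset.mem_Icc]
    constructor
    · rintro ⟨E, ⟨j, ⟨hj1, hj2⟩, rfl⟩, rfl⟩
      exact ⟨j, hj1, hj2, rfl⟩
    · rintro ⟨j, hj1, hj2, rfl⟩
      exact ⟨MiF k j, ⟨j, ⟨hj1, hj2⟩, rfl⟩, rfl⟩
  -- the induced permutation of edge indices
  have hexists : ∀ i : ℕ, ∃ j : ℕ, 1 ≤ i → i ≤ k →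
      (1 ≤ j ∧ j ≤ k ∧ (tEF k i).image φ = tEF k j) := by
    intro i
    by_cases h : 1 ≤ i ∧ i ≤ k
    · have hmem : tEF k i ∈ tildeEdges (GkEdges k) := (hmemTE _).2 ⟨i, h.1, h.2, rfl⟩
      have h2 := (hedgeiff (tEF k i)).1 hmem
      obtain ⟨j, hj1, hj2, hjeq⟩ := (hmemTE _).1 h2
      exact ⟨j, fun _ _ => ⟨hj1, hj2, hjeq⟩⟩
    · exact ⟨1, fun h1 h2 => absurd ⟨h1, h2⟩ h⟩
  choose σ hσ using hexists
  -- membership transfer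
  have hpat : ∀ (x) (i : ℕ), 1 ≤ i → i ≤ k → (x ∈ tEF k i ↔ φ x ∈ tEF k (σ i)) := by
    intro x i h1 h2
    rw [← (hσ i h1 h2).2.2]
    constructor
    · exact fun h => Finset.mem_image_of_mem φ h
    · intro h
      obtain ⟨y, hy, he⟩ := Finset.mem_image.1 h
      rwa [← φ.injective he]
  -- distances between edge indices are preserved
  have hdist : ∀ i j, 1 ≤ i → i < j → j ≤ k →
      (σ i < σ j ∧ σ j - σ i = j - i) ∨ (σ j < σ i ∧ σ i - σ j = j - i) := by
    intro i j h1 h2 h3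
    obtain ⟨hi1, hi2, hie⟩ := hσ i h1 (by omega)
    obtain ⟨hj1, hj2, hje⟩ := hσ j (by omega) h3
    have hne : σ i ≠ σ j := by
      intro he
      have h4 : tEF k i = tEF k j :=
        Finset.image_injective φ.injective (by rw [hie, hje, he])
      have := tEF_inj k i j (by omega) h4
      omega
    have c1 : (tEF k i ∩ tEF k j).card = i + k - j := by
      rw [tE_inter k i j (by omega) (by omega),
        Finset.card_image_of_injective _ Sum.inl_injective,
        card_MiF_inter k i j (by omega) (by omega) (by omega)]
    have c2 : (tEF k (σ i) ∩ tEF k (σ j)).card = i + k - j := by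
      rw [← hie, ← hje, ← Finset.image_inter _ _ φ.injective,
        Finset.card_image_of_injective _ φ.injective, c1]
    rcases Nat.lt_or_ge (σ i) (σ j) with hlt | hge
    · left
      refine ⟨hlt, ?_⟩
      rw [tE_inter k _ _ (by omega) (by omega),
        Finset.card_image_of_injective _ Sum.inl_injective,
        card_MiF_inter k _ _ (by omega) (by omega) (by omega)] at c2
      omega
    · right
      have hgt : σ j < σ i := by omega
      refine ⟨hgt, ?_⟩
      rw [Finset.inter_comm, tE_inter k _ _ (by omega) (by omega),
        Finset.card_image_of_injective _ Sum.inl_injective,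
        card_MiF_inter k _ _ (by omega) (by omega) (by omega)] at c2
      omega
  -- the edge permutation is the identity or the reversal
  have hcase : (∀ i, 1 ≤ i → i ≤ k → σ i = i) ∨ (∀ i, 1 ≤ i → i ≤ k → σ i = k + 1 - i) := by
    obtain ⟨ha1, ha2, -⟩ := hσ 1 le_rfl (by omega)
    obtain ⟨hb1, hb2, -⟩ := hσ k (by omega) le_rfl
    rcases hdist 1 k le_rfl (by omega) le_rfl with ⟨hlt, he⟩ | ⟨hlt, he⟩
    · left
      intro i hi1 hi2
      rcases Nat.lt_or_ge 1 i with h1i | h1i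
      · obtain ⟨hc1, hc2, -⟩ := hσ i hi1 hi2
        rcases hdist 1 i le_rfl h1i hi2 with ⟨h', he'⟩ | ⟨h', he'⟩ <;> omega
      · have hi : i = 1 := by omega
        subst hi
        omega
    · right
      intro i hi1 hi2
      rcases Nat.lt_or_ge 1 i with h1i | h1i
      · obtain ⟨hc1, hc2, -⟩ := hσ i hi1 hi2
        rcases hdist 1 i le_rfl h1i hi2 with ⟨h', he'⟩ | ⟨h', he'⟩ <;> omega
      · have hi : i = 1 := by omega
        subst hi
        omega
  -- shape of images of old vertices
  have hshape : ∀ v, 1 ≤ v → v ≤ 2*k-1 →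
      (∃ w, 1 ≤ w ∧ w ≤ 2*k-1 ∧ φ (Sum.inl v) = Sum.inl w) ∨
      (∃ j b, 1 ≤ j ∧ j ≤ k ∧ φ (Sum.inl v) = Sum.inr (MiF k j, b)) := by
    intro v hv1 hv2
    have hin : Sum.inl v ∈ tildeVerts (GkVerts k) (GkEdges k) := by
      simp only [tildeVerts]
      apply Finset.mem_union_left
      exact Finset.mem_image_of_mem _ (by rw [GkVerts, Finset.mem_Icc]; omega)
    have hout : φ (Sum.inl v) ∈ tildeVerts (GkVerts k) (GkEdges k) := by
      by_contra hcon
      have h1 := hfix _ hcon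
      have h2 := φ.injective h1
      rw [h2] at hcon
      exact hcon hin
    simp only [tildeVerts, Finset.mem_union] at hout
    rcases hout with h | h
    · obtain ⟨w, hw, he⟩ := Finset.mem_image.1 h
      rw [GkVerts, Finset.mem_Icc] at hw
      exact Or.inl ⟨w, hw.1, hw.2, he.symm⟩
    · obtain ⟨E, hE, hx⟩ := Finset.mem_biUnion.1 h
      simp only [GkEdges, Finset.mem_image, Finset.mem_Icc] at hE
      obtain ⟨j, ⟨hj1, hj2⟩, rfl⟩ := hE
      simp only [Finset.mem_insert, Finset.mem_singleton] at hx
      rcases hx with h' | h'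
      · exact Or.inr ⟨j, 0, hj1, hj2, h'⟩
      · exact Or.inr ⟨j, 1, hj1, hj2, h'⟩
  -- triple invariance
  have htrip : ∀ x ∈ ({Sum.inl 1, Sum.inl (2*k-2), Sum.inl (2*k-1)} :
      Finset (ℕ ⊕ (Finset ℕ × Fin 2))),
      φ x ∈ ({Sum.inl 1, Sum.inl (2*k-2), Sum.inl (2*k-1)} :
      Finset (ℕ ⊕ (Finset ℕ × Fin 2))) := by
    intro x hx
    rw [← hinv]
    exact Finset.mem_image_of_mem φ hx
  intro v hv
  rw [GkVerts, Finset.mem_Icc] at hv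
  rcases hcase with hid | hrev
  · -- identity case
    have hpat' : ∀ w i, 1 ≤ i → i ≤ k →
        (Sum.inl w ∈ tEF k i ↔ φ (Sum.inl w) ∈ tEF k i) := by
      intro w i h1 h2
      have := hpat (Sum.inl w) i h1 h2
      rwa [hid i h1 h2] at this
    by_cases hv1 : v = 1
    · subst hv1
      have h1 := htrip (Sum.inl 1) (by simp)
      have hB : φ (Sum.inl 1) ∉ tEF k (k-1) := by
        intro h
        have h2 := (hpat' 1 (k-1) (by omega) (by omega)).2 h
        rw [memtE_inl] at h2
        omega
      have hC : φ (Sum.inl 1) ∉ tEF k k := by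
        intro h
        have h2 := (hpat' 1 k (by omega) le_rfl).2 h
        rw [memtE_inl] at h2
        omega
      simp only [Finset.mem_insert, Finset.mem_singleton] at h1
      rcases h1 with h | h | h
      · exact h
      · exact absurd (by rw [h, memtE_inl]; omega) hB
      · exact absurd (by rw [h, memtE_inl]; omega) hC
    by_cases hv2 : v = 2*k-1
    · subst hv2
      have h1 := htrip (Sum.inl (2*k-1)) (by simp)
      have hB : φ (Sum.inl (2*k-1)) ∉ tEF k 1 := by
        intro h
        have h2 := (hpat' (2*k-1) 1 le_rfl (by omega)).2 h
        rw [memtE_inl] at h2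
        omega
      have hC : φ (Sum.inl (2*k-1)) ∉ tEF k (k-1) := by
        intro h
        have h2 := (hpat' (2*k-1) (k-1) (by omega) (by omega)).2 h
        rw [memtE_inl] at h2
        omega
      simp only [Finset.mem_insert, Finset.mem_singleton] at h1
      rcases h1 with h | h | h
      · exact absurd (by rw [h, memtE_inl]; omega) hB
      · exact absurd (by rw [h, memtE_inl]; omega) hC
      · exact h
    · -- generic interior vertex
      rcases hshape v hv.1 hv.2 with ⟨w, hw1, hw2, hweq⟩ | ⟨j, b, hj1, hj2, hjeq⟩
      · have hvw : v = w := by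
          apply pattern_inj k v w hk hv.1 hv.2 hw1 hw2
          intro i h1 h2
          rw [← memtE_inl k v i, ← memtE_inl k w i, hpat' v i h1 h2, hweq]
        rw [hweq, hvw]
      · exfalso
        have hA : φ (Sum.inl v) ∈ tEF k (max 1 (v+1-k)) :=
          (hpat' v _ (by omega) (by omega)).1 (by rw [memtE_inl]; omega)
        have hB : φ (Sum.inl v) ∈ tEF k (min v k) :=
          (hpat' v _ (by omega) (by omega)).1 (by rw [memtE_inl]; omega)
        rw [hjeq, memtE_inr] at hA hB
        have := MiF_inj k (max 1 (v+1-k)) (min v k) (by omega) (hA.symm.trans hB)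
        omega
  · -- reversal case: contradiction
    exfalso
    have e2 : σ (k-1) = 2 := by have := hrev (k-1) (by omega) (by omega); omega
    have e3 : σ 1 = k := by have := hrev 1 le_rfl (by omega); omega
    have hA : φ (Sum.inl (2*k-2)) ∈ tEF k 2 := by
      have h := (hpat (Sum.inl (2*k-2)) (k-1) (by omega) (by omega)).1
        (by rw [memtE_inl]; omega)
      rwa [e2] at h
    have hC : φ (Sum.inl (2*k-2)) ∉ tEF k k := by
      intro h
      have hiff := hpat (Sum.inl (2*k-2)) 1 le_rfl (by omega)
      rw [e3] at hiff
      have h2 := hiff.2 h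
      rw [memtE_inl] at h2
      omega
    have h1 := htrip (Sum.inl (2*k-2)) (by simp)
    simp only [Finset.mem_insert, Finset.mem_singleton] at h1
    rcases h1 with h | h | h
    · rw [h, memtE_inl] at hA; omega
    · exact hC (by rw [h, memtE_inl]; omega)
    · exact hC (by rw [h, memtE_inl]; omega)
end

section
/- For every integer k ≥ 4, if φ is an automorphism of G̃*_k that leaves the vertices x and v_{2k−1} invariant (i.e., {φ(x), φ(v_{2k−1})} = {x, v_{2k−1}}), then φ restricted to the vertices of G*_k is the identity. -/
open Finset Sum

private abbrev Vt := ℕ ⊕ (Finset ℕ × Fin 2)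

private def tmap (E : Finset ℕ) : Finset Vt :=
  E.image Sum.inl ∪ {Sum.inr (E, 0), Sum.inr (E, 1)}

private lemma inl_mem_tmap {v : ℕ} {E : Finset ℕ} : Sum.inl v ∈ tmap E ↔ v ∈ E := by
  simp [tmap]

private lemma inr_mem_tmap {p : Finset ℕ × Fin 2} {E : Finset ℕ} :
    Sum.inr p ∈ tmap E ↔ p.1 = E := by
  obtain ⟨F, b⟩ := p
  simp only [tmap, mem_union, mem_image, mem_insert, mem_singleton]
  constructor
  · rintro (⟨a, _, h⟩ | h | h)
    · exact absurd h (by simp)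
    · exact congrArg Prod.fst (Sum.inr.inj h)
    · exact congrArg Prod.fst (Sum.inr.inj h)
  · rintro rfl
    fin_cases b
    · exact Or.inr (Or.inl rfl)
    · exact Or.inr (Or.inr rfl)

private lemma tmap_injective : Function.Injective tmap := by
  intro E F h
  have h0 : (Sum.inr (E, 0) : Vt) ∈ tmap F := by
    rw [← h]; exact inr_mem_tmap.mpr rfl
  exact inr_mem_tmap.mp h0

private lemma tmap_inter {E F : Finset ℕ} (h : E ≠ F) :
    tmap E ∩ tmap F = (E ∩ F).image Sum.inl := by
  ext u
  cases u with
  | inl v => simp [inl_mem_tmap]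
  | inr p =>
    simp only [mem_inter, inr_mem_tmap, mem_image]
    constructor
    · rintro ⟨rfl, rfl⟩; exact absurd rfl h
    · rintro ⟨a, _, h⟩; exact absurd h (by simp)

/-- For k ≥ 4, any automorphism of G̃*_k leaving the vertices x and v_{2k−1}
invariant (as a pair) is the identity on the vertices of G*_k. -/
theorem stmt_18 (k : ℕ) (hk : 4 ≤ k)
    (φ : Equiv.Perm (ℕ ⊕ (Finset ℕ × Fin 2)))
    (hauto : IsAuto (tildeVerts (GstarVerts k) (GstarEdges k))
      (tildeEdges (GstarEdges k)) φ)
    (hinv : ({Sum.inl (2 * k), Sum.inl (2 * k - 1)} :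
        Finset (ℕ ⊕ (Finset ℕ × Fin 2))).image φ
      = {Sum.inl (2 * k), Sum.inl (2 * k - 1)}) :
    ∀ v ∈ GstarVerts k, φ (Sum.inl v) = Sum.inl v := by
  obtain ⟨-, hedge⟩ := hauto
  set star : Finset ℕ := insert (2 * k) (insert (k + 2) (Finset.Icc 1 (k - 2))) with hstar_def
  have mem_star : ∀ w, w ∈ star ↔ (w = 2 * k ∨ w = k + 2 ∨ (1 ≤ w ∧ w ≤ k - 2)) := by
    intro w; simp [hstar_def, Finset.mem_Icc]
  have hTilde : tildeEdges (GstarEdges k) = (GstarEdges k).image tmap := rfl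
  have hGE : ∀ E, E ∈ GstarEdges k ↔
      (E = star ∨ ∃ i, 1 ≤ i ∧ i ≤ k ∧ E = Finset.Icc i (i + k - 1)) := by
    intro E
    simp only [GstarEdges, GkEdges, mem_insert, mem_image, Finset.mem_Icc]
    constructor
    · rintro (h | ⟨i, ⟨h1, h2⟩, h3⟩)
      · exact Or.inl h
      · exact Or.inr ⟨i, h1, h2, h3.symm⟩
    · rintro (h | ⟨i, h1, h2, rfl⟩)
      · exact Or.inl h
      · exact Or.inr ⟨i, ⟨h1, h2⟩, rfl⟩
  have hstar_mem : star ∈ GstarEdges k := (hGE star).mpr (Or.inl rfl)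
  have hMi_mem : ∀ i, 1 ≤ i → i ≤ k → Finset.Icc i (i + k - 1) ∈ GstarEdges k :=
    fun i h1 h2 => (hGE _).mpr (Or.inr ⟨i, h1, h2, rfl⟩)
  -- basic φ facts
  have himg : ∀ (s : Finset Vt) (u : Vt), φ u ∈ s.image φ ↔ u ∈ s := by
    intro s u
    constructor
    · intro h
      obtain ⟨a, ha, hau⟩ := mem_image.mp h
      rwa [← φ.injective hau]
    · exact fun h => mem_image_of_mem _ h
  have himginj : ∀ s t : Finset Vt, s.image φ = t.image φ → s = t :=
    fun s t h => Finset.image_injective φ.injective h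
  -- the image of any tilde edge is a tilde edge
  have hEdge : ∀ E ∈ GstarEdges k, ∃ F ∈ GstarEdges k, (tmap E).image φ = tmap F := by
    intro E hE
    have h1 : tmap E ∈ tildeEdges (GstarEdges k) := by
      rw [hTilde]; exact mem_image_of_mem _ hE
    have h2 := (hedge (tmap E)).mp h1
    rw [hTilde] at h2
    obtain ⟨F, hF, hFe⟩ := mem_image.mp h2
    exact ⟨F, hF, hFe.symm⟩
  -- star is not an Icc edge
  have hstar_ne : ∀ i, i ≤ k → star ≠ Finset.Icc i (i + k - 1) := by
    intro i hik h
    have : (2 * k : ℕ) ∈ Finset.Icc i (i + k - 1) := by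
      rw [← h]; exact (mem_star _).mpr (Or.inl rfl)
    rw [Finset.mem_Icc] at this; omega
  have hIccinj : ∀ i j, 1 ≤ i → i ≤ k → 1 ≤ j → j ≤ k →
      Finset.Icc i (i + k - 1) = Finset.Icc j (j + k - 1) → i = j := by
    intro i j h1 h2 h3 h4 h
    have hi : i ∈ Finset.Icc j (j + k - 1) := by
      rw [← h, Finset.mem_Icc]; omega
    have hj : j ∈ Finset.Icc i (i + k - 1) := by
      rw [h, Finset.mem_Icc]; omega
    rw [Finset.mem_Icc] at hi hj; omega
  -- which of the two cases of hinv
  have hmem2k : φ (Sum.inl (2 * k)) = Sum.inl (2 * k) ∨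
      φ (Sum.inl (2 * k)) = Sum.inl (2 * k - 1) := by
    have h := hinv ▸ mem_image_of_mem φ
      (show (Sum.inl (2 * k) : Vt) ∈ {Sum.inl (2 * k), Sum.inl (2 * k - 1)} by simp)
    simpa using h
  rcases hmem2k with h2k | h2k

  · -- main case: φ fixes x = 2k
    have h2k1 : φ (Sum.inl (2 * k - 1)) = Sum.inl (2 * k - 1) := by
      have h := hinv ▸ mem_image_of_mem φ
        (show (Sum.inl (2 * k - 1) : Vt) ∈ {Sum.inl (2 * k), Sum.inl (2 * k - 1)} by simp)
      simp only [mem_insert, mem_singleton] at h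
      rcases h with h | h
      · exfalso
        have h' := φ.injective (h.trans h2k.symm)
        simp only [Sum.inl.injEq] at h'
        omega
      · exact h
    have hstar_eq : (tmap star).image φ = tmap star := by
      obtain ⟨F, hF, heq⟩ := hEdge star hstar_mem
      have h2kF : (2 * k : ℕ) ∈ F := by
        have h : (Sum.inl (2 * k) : Vt) ∈ tmap F := by
          rw [← heq, ← h2k]
          exact (himg _ _).mpr (inl_mem_tmap.mpr ((mem_star _).mpr (Or.inl rfl)))
        exact inl_mem_tmap.mp h
      rcases (hGE F).mp hF with rfl | ⟨i, h1, h2, rfl⟩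
      · exact heq
      · rw [Finset.mem_Icc] at h2kF; omega
    have hMk_eq : (tmap (Finset.Icc k (k + k - 1))).image φ
        = tmap (Finset.Icc k (k + k - 1)) := by
      obtain ⟨F, hF, heq⟩ := hEdge _ (hMi_mem k (by omega) le_rfl)
      have h2kF : (2 * k - 1 : ℕ) ∈ F := by
        have h : (Sum.inl (2 * k - 1) : Vt) ∈ tmap F := by
          rw [← heq, ← h2k1]
          exact (himg _ _).mpr (inl_mem_tmap.mpr (by rw [Finset.mem_Icc]; omega))
        exact inl_mem_tmap.mp h
      rcases (hGE F).mp hF with rfl | ⟨i, h1, h2, rfl⟩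
      · rw [mem_star] at h2kF; omega
      · have hik : i = k := by rw [Finset.mem_Icc] at h2kF; omega
        subst hik; exact heq
    have hcard : ∀ i, 1 ≤ i → i < k →
        (tmap (Finset.Icc i (i + k - 1)) ∩ tmap (Finset.Icc k (k + k - 1))).card = i := by
      intro i h1 h2
      have hne : Finset.Icc i (i + k - 1) ≠ Finset.Icc k (k + k - 1) := by
        intro h
        exact absurd (hIccinj i k h1 (le_of_lt h2) (by omega) le_rfl h) (by omega)
      rw [tmap_inter hne, Finset.card_image_of_injective _ Sum.inl_injective]
      have hI : Finset.Icc i (i + k - 1) ∩ Finset.Icc k (k + k - 1)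
          = Finset.Icc k (i + k - 1) := by
        ext w; simp only [Finset.mem_inter, Finset.mem_Icc]; omega
      rw [hI, Nat.card_Icc]; omega
    have hM_eq : ∀ i, 1 ≤ i → i ≤ k →
        (tmap (Finset.Icc i (i + k - 1))).image φ = tmap (Finset.Icc i (i + k - 1)) := by
      intro i h1 h2
      rcases eq_or_lt_of_le h2 with rfl | hik
      · exact hMk_eq
      obtain ⟨F, hF, heq⟩ := hEdge _ (hMi_mem i h1 h2)
      rcases (hGE F).mp hF with rfl | ⟨j, hj1, hj2, rfl⟩
      · exfalso
        have h := tmap_injective (himginj _ _ (heq.trans hstar_eq.symm))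
        exact hstar_ne i h2 h.symm
      · rcases eq_or_lt_of_le hj2 with rfl | hjk
        · exfalso
          have h := tmap_injective (himginj _ _ (heq.trans hMk_eq.symm))
          exact absurd (hIccinj i j h1 h2 (by omega) le_rfl h) (by omega)
        · have hc1 := hcard i h1 hik
          have hc2 := hcard j hj1 hjk
          have hkey : (tmap (Finset.Icc j (j + k - 1)) ∩ tmap (Finset.Icc k (k + k - 1))).card
              = (tmap (Finset.Icc i (i + k - 1)) ∩ tmap (Finset.Icc k (k + k - 1))).card := by
            conv_lhs => rw [← heq, ← hMk_eq]
            rw [← Finset.image_inter _ _ φ.injective,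
              Finset.card_image_of_injective _ φ.injective]
          have hij : j = i := by omega
          subst hij; exact heq
    have hE_eq : ∀ E ∈ GstarEdges k, (tmap E).image φ = tmap E := by
      intro E hE
      rcases (hGE E).mp hE with rfl | ⟨i, h1, h2, rfl⟩
      · exact hstar_eq
      · exact hM_eq i h1 h2
    have hmemiff : ∀ E ∈ GstarEdges k, ∀ u : Vt, φ u ∈ tmap E ↔ u ∈ tmap E := by
      intro E hE u
      conv_lhs => rw [← hE_eq E hE]
      exact himg _ _
    have main : ∀ E F G : Finset ℕ, E ∈ GstarEdges k → F ∈ GstarEdges k →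
        G ∈ GstarEdges k → E ≠ F → ∀ v : ℕ, v ∈ E → v ∈ F →
        (∀ w, w ∈ E → w ∈ F → (w ∈ G ↔ v ∈ G) → w = v) →
        φ (Sum.inl v) = Sum.inl v := by
      intro E F G hE hF hG hEF v hvE hvF huniq
      have h1 : φ (Sum.inl v) ∈ tmap E := (hmemiff E hE _).mpr (inl_mem_tmap.mpr hvE)
      have h2 : φ (Sum.inl v) ∈ tmap F := (hmemiff F hF _).mpr (inl_mem_tmap.mpr hvF)
      have h3 : φ (Sum.inl v) ∈ tmap G ↔ v ∈ G := by
        rw [hmemiff G hG]; exact inl_mem_tmap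
      rcases hw : φ (Sum.inl v) with w | p
      · rw [hw] at h1 h2 h3
        rw [inl_mem_tmap] at h1 h2 h3
        rw [huniq w h1 h2 h3]
      · rw [hw] at h1 h2
        rw [inr_mem_tmap] at h1 h2
        exact absurd (h1.symm.trans h2) hEF
    intro v hv
    have hv' : v = 2 * k ∨ (1 ≤ v ∧ v ≤ 2 * k - 1) := by
      simp only [GstarVerts, GkVerts, mem_insert, Finset.mem_Icc] at hv
      tauto
    rcases hv' with rfl | ⟨hv1, hv2⟩
    · exact h2k
    by_cases hv3 : v = 2 * k - 1
    · rw [hv3]; exact h2k1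
    have hv4 : v ≤ 2 * k - 2 := by omega
    by_cases hvk : v ≤ k
    · rcases eq_or_lt_of_le hv1 with h | h
      · -- v = 1
        refine main star (Finset.Icc 1 (1 + k - 1)) (Finset.Icc 2 (2 + k - 1))
          hstar_mem (hMi_mem 1 le_rfl (by omega)) (hMi_mem 2 (by omega) (by omega))
          (hstar_ne 1 (by omega)) v ?_ ?_ ?_
        · rw [mem_star]; omega
        · rw [Finset.mem_Icc]; omega
        · intro w hwE hwF hiff
          rw [mem_star] at hwE
          rw [Finset.mem_Icc] at hwF
          rw [Finset.mem_Icc, Finset.mem_Icc] at hiff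
          omega
      · by_cases hvk2 : v = k
        · refine main (Finset.Icc 1 (1 + k - 1)) (Finset.Icc k (k + k - 1))
            (Finset.Icc 1 (1 + k - 1)) (hMi_mem 1 (by omega) (by omega))
            (hMi_mem k (by omega) le_rfl) (hMi_mem 1 (by omega) (by omega)) ?_ v ?_ ?_ ?_
          · intro hh
            exact absurd (hIccinj 1 k (by omega) (by omega) (by omega) le_rfl hh) (by omega)
          · rw [Finset.mem_Icc]; omega
          · rw [Finset.mem_Icc]; omega
          · intro w hwE hwF _
            rw [Finset.mem_Icc] at hwE hwF; omega
        · refine main (Finset.Icc 1 (1 + k - 1)) (Finset.Icc v (v + k - 1))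
            (Finset.Icc (v + 1) (v + 1 + k - 1))
            (hMi_mem 1 (by omega) (by omega)) (hMi_mem v (by omega) (by omega))
            (hMi_mem (v + 1) (by omega) (by omega)) ?_ v ?_ ?_ ?_
          · intro hh
            exact absurd (hIccinj 1 v (by omega) (by omega) (by omega) (by omega) hh)
              (by omega)
          · rw [Finset.mem_Icc]; omega
          · rw [Finset.mem_Icc]; omega
          · intro w hwE hwF hiff
            rw [Finset.mem_Icc] at hwE hwF
            rw [Finset.mem_Icc, Finset.mem_Icc] at hiff
            omega
    · refine main (Finset.Icc (v - k + 1) (v - k + 1 + k - 1)) (Finset.Icc k (k + k - 1))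
        (Finset.Icc (v - k) (v - k + k - 1))
        (hMi_mem (v - k + 1) (by omega) (by omega)) (hMi_mem k (by omega) le_rfl)
        (hMi_mem (v - k) (by omega) (by omega)) ?_ v ?_ ?_ ?_
      · intro hh
        exact absurd (hIccinj (v - k + 1) k (by omega) (by omega) (by omega) le_rfl hh)
          (by omega)
      · rw [Finset.mem_Icc]; omega
      · rw [Finset.mem_Icc]; omega
      · intro w hwE hwF hiff
        rw [Finset.mem_Icc] at hwE hwF
        rw [Finset.mem_Icc, Finset.mem_Icc] at hiff
        omega

  · -- contradiction: φ x = v_{2k-1} is impossible by a degree count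
    exfalso
    have hGsE : GstarEdges k = insert star (GkEdges k) := by rw [hstar_def]; rfl
    have hsymm_mem : ∀ s, s ∈ tildeEdges (GstarEdges k) →
        s.image ⇑φ.symm ∈ tildeEdges (GstarEdges k) := by
      intro s hs
      rw [hedge (s.image ⇑φ.symm), Finset.image_image]
      have hcomp : (⇑φ ∘ ⇑φ.symm) = id := by funext x; simp
      rw [hcomp, Finset.image_id]
      exact hs
    have hdeg_phi : ∀ u : Vt,
        ((tildeEdges (GstarEdges k)).filter (fun s => φ u ∈ s)).card
          = ((tildeEdges (GstarEdges k)).filter (fun s => u ∈ s)).card := by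
      intro u
      have hfil : (tildeEdges (GstarEdges k)).filter (fun s => φ u ∈ s)
          = ((tildeEdges (GstarEdges k)).filter (fun s => u ∈ s)).image
              (fun s => s.image ⇑φ) := by
        ext s
        simp only [Finset.mem_filter, Finset.mem_image]
        constructor
        · rintro ⟨hs, hus⟩
          refine ⟨s.image ⇑φ.symm, ⟨hsymm_mem s hs, ?_⟩, ?_⟩
          · have h := mem_image_of_mem ⇑φ.symm hus
            simpa using h
          · rw [Finset.image_image]
            have hcomp : (⇑φ ∘ ⇑φ.symm) = id := by funext x; simp
            rw [hcomp, Finset.image_id]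
        · rintro ⟨t, ⟨ht, hut⟩, rfl⟩
          exact ⟨(hedge t).mp ht, mem_image_of_mem _ hut⟩
      rw [hfil, Finset.card_image_of_injective _ (Finset.image_injective φ.injective)]
    have hdeg_inl : ∀ v : ℕ,
        ((tildeEdges (GstarEdges k)).filter (fun s => Sum.inl v ∈ s)).card
          = ((GstarEdges k).filter (fun E => v ∈ E)).card := by
      intro v
      rw [hTilde, Finset.filter_image, Finset.card_image_of_injective _ tmap_injective]
      congr 1
      exact Finset.filter_congr (fun E _ => by simp [inl_mem_tmap])
    have hdeg_inr : ∀ p : Finset ℕ × Fin 2,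
        ((tildeEdges (GstarEdges k)).filter (fun s => Sum.inr p ∈ s)).card ≤ 1 := by
      intro p
      have hsub : (tildeEdges (GstarEdges k)).filter (fun s => Sum.inr p ∈ s)
          ⊆ {tmap p.1} := by
        intro s hs
        rw [Finset.mem_filter, hTilde] at hs
        obtain ⟨hs1, hs2⟩ := hs
        obtain ⟨E, _, rfl⟩ := mem_image.mp hs1
        rw [inr_mem_tmap] at hs2
        rw [Finset.mem_singleton, hs2]
      calc ((tildeEdges (GstarEdges k)).filter (fun s => Sum.inr p ∈ s)).card
          ≤ ({tmap p.1} : Finset _).card := Finset.card_le_card hsub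
        _ = 1 := Finset.card_singleton _
    have hGkfil : ∀ v : ℕ, (GkEdges k).filter (fun E => v ∈ E)
        = ((Finset.Icc 1 k).filter (fun i => v ∈ Finset.Icc i (i + k - 1))).image
            (fun i => Finset.Icc i (i + k - 1)) := by
      intro v
      show ((Finset.Icc 1 k).image _).filter _ = _
      rw [Finset.filter_image]
    have hGkinjOn : ∀ s : Finset ℕ, s ⊆ Finset.Icc 1 k →
        (s.image (fun i => Finset.Icc i (i + k - 1))).card = s.card := by
      intro s hs
      apply Finset.card_image_of_injOn
      intro i hi j hj h
      have hi' := Finset.mem_Icc.mp (hs hi)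
      have hj' := Finset.mem_Icc.mp (hs hj)
      exact hIccinj i j hi'.1 hi'.2 hj'.1 hj'.2 h
    have hdegk : ((tildeEdges (GstarEdges k)).filter (fun s => Sum.inl k ∈ s)).card = k := by
      rw [hdeg_inl, hGsE, Finset.filter_insert, if_neg (by rw [mem_star]; omega)]
      have h2 : (GkEdges k).filter (fun E => k ∈ E) = GkEdges k := by
        apply Finset.filter_true_of_mem
        intro E hE
        simp only [GkEdges, mem_image, Finset.mem_Icc] at hE
        obtain ⟨i, ⟨hi1, hi2⟩, rfl⟩ := hE
        rw [Finset.mem_Icc]; omega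
      rw [h2]
      show ((Finset.Icc 1 k).image _).card = k
      rw [hGkinjOn _ (Finset.Subset.refl _), Nat.card_Icc]
      omega
    have hdeg_le : ∀ u ∈ tmap star,
        ((tildeEdges (GstarEdges k)).filter (fun s => u ∈ s)).card ≤ k - 1 := by
      intro u hu
      rcases u with v | p
      · rw [inl_mem_tmap, mem_star] at hu
        rw [hdeg_inl]
        have hsub : (GstarEdges k).filter (fun E => v ∈ E)
            ⊆ insert star ((GkEdges k).filter (fun E => v ∈ E)) := by
          intro E hE
          rw [Finset.mem_filter, hGsE, mem_insert] at hE
          rcases hE with ⟨rfl | hE1, hE2⟩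
          · exact mem_insert_self _ _
          · exact mem_insert_of_mem (Finset.mem_filter.mpr ⟨hE1, hE2⟩)
        have hb : ((GkEdges k).filter (fun E => v ∈ E)).card ≤ k - 2 := by
          rw [hGkfil v, hGkinjOn _ (Finset.filter_subset _ _)]
          rcases hu with rfl | rfl | ⟨h1, h2⟩
          · have hsub2 : (Finset.Icc 1 k).filter
                (fun i => (2 * k : ℕ) ∈ Finset.Icc i (i + k - 1)) ⊆ Finset.Icc 3 k := by
              intro i hi
              simp only [Finset.mem_filter, Finset.mem_Icc] at hi ⊢
              omega
            calc _ ≤ (Finset.Icc 3 k).card := Finset.card_le_card hsub2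
              _ ≤ k - 2 := by rw [Nat.card_Icc]; omega
          · have hsub2 : (Finset.Icc 1 k).filter
                (fun i => (k + 2 : ℕ) ∈ Finset.Icc i (i + k - 1)) ⊆ Finset.Icc 3 k := by
              intro i hi
              simp only [Finset.mem_filter, Finset.mem_Icc] at hi ⊢
              omega
            calc _ ≤ (Finset.Icc 3 k).card := Finset.card_le_card hsub2
              _ ≤ k - 2 := by rw [Nat.card_Icc]; omega
          · have hsub2 : (Finset.Icc 1 k).filter
                (fun i => v ∈ Finset.Icc i (i + k - 1)) ⊆ Finset.Icc 1 v := by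
              intro i hi
              simp only [Finset.mem_filter, Finset.mem_Icc] at hi ⊢
              omega
            calc _ ≤ (Finset.Icc 1 v).card := Finset.card_le_card hsub2
              _ ≤ k - 2 := by rw [Nat.card_Icc]; omega
        calc ((GstarEdges k).filter (fun E => v ∈ E)).card
            ≤ (insert star ((GkEdges k).filter (fun E => v ∈ E))).card :=
              Finset.card_le_card hsub
          _ ≤ ((GkEdges k).filter (fun E => v ∈ E)).card + 1 := Finset.card_insert_le _ _
          _ ≤ k - 1 := by omega
      · exact le_trans (hdeg_inr p) (by omega)
    obtain ⟨F, hF, heq⟩ := hEdge star hstar_mem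
    have h2kF : (2 * k - 1 : ℕ) ∈ F := by
      have h : (Sum.inl (2 * k - 1) : Vt) ∈ tmap F := by
        rw [← heq, ← h2k]
        exact (himg _ _).mpr (inl_mem_tmap.mpr ((mem_star _).mpr (Or.inl rfl)))
      exact inl_mem_tmap.mp h
    have hFk : F = Finset.Icc k (k + k - 1) := by
      rcases (hGE F).mp hF with rfl | ⟨i, h1, h2, rfl⟩
      · rw [mem_star] at h2kF; omega
      · have hik : i = k := by rw [Finset.mem_Icc] at h2kF; omega
        subst hik; rfl
    have hkF : (Sum.inl k : Vt) ∈ (tmap star).image φ := by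
      rw [heq, hFk]
      exact inl_mem_tmap.mpr (by rw [Finset.mem_Icc]; omega)
    obtain ⟨u, hu, hphiu⟩ := mem_image.mp hkF
    have hle := hdeg_le u hu
    rw [← hdeg_phi u, hphiu, hdegk] at hle
    omega
end

section
/- For every integer k ≥ 3 and every integer t ≥ k−2, the k-graph G°_{k,t} satisfies: (1) G°_{k,t} is asymmetric, and (2) every k-subgraph (X', M') of G°_{k,t} with at least two vertices and (X', M') ≠ G°_{k,t} has a non-identical automorphism. -/
/-- Cyclic index in `{1, …, n}`: `wrap n i` is the representative of `i` (for `i ≥ 1`)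
modulo `n`, taken in `{1, …, n}`. -/
def wrap (n i : ℕ) : ℕ := (i - 1) % n + 1

/-- Vertices of `G_{k,t}`, encoded as pairs `(type, index)` in `ℕ × ℕ`:
`v_i = (0, i)`, `u_i = (1, i)`, and `v^j_i = (j + 1, i)` for `j ∈ {1, …, k-3}`,
with `i ∈ {1, …, tk}`. -/
def GktVerts (k t : ℕ) : Finset (ℕ × ℕ) :=
  Finset.range (k - 1) ×ˢ Finset.Icc 1 (t * k)

/-- The edge `E_i = {v_i, u_i, v^1_i, …, v^{k-3}_i, v_{i+1}}` (indices cyclic mod `tk`). -/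
def edgeE (k t i : ℕ) : Finset (ℕ × ℕ) :=
  {(0, i), (1, i), (0, wrap (t * k) (i + 1))} ∪
    (Finset.Icc 2 (k - 2)).image (fun c => (c, i))

/-- The edge `E_{i,j} = {v^j_i, v^j_{i+1}, …, v^j_{i+k-1}}` (indices cyclic mod `tk`). -/
def edgeEij (k t i j : ℕ) : Finset (ℕ × ℕ) :=
  (Finset.range k).image (fun l => (j + 1, wrap (t * k) (i + l)))

/-- The edge set of `G_{k,t}`: all `E_i` for `i ∈ {1, …, tk}` together with the edges
`E_{i,j}` for `j ∈ {1, …, k-3}` and `i = j + s·k`, `s ∈ {0, 1, …, t-1}`. -/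
def GktEdges (k t : ℕ) : Finset (Finset (ℕ × ℕ)) :=
  (Finset.Icc 1 (t * k)).image (fun i => edgeE k t i) ∪
    ((Finset.Icc 1 (k - 3)) ×ˢ Finset.range t).image
      (fun p => edgeEij k t (p.1 + p.2 * k) p.1)

/-- Vertices of `G°_{k,t}`: those of `G_{k,t}` plus the new vertex `x = (0, 0)`. -/
def GcircVerts (k t : ℕ) : Finset (ℕ × ℕ) := insert (0, 0) (GktVerts k t)

/-- Edges of `G°_{k,t}`: those of `G_{k,t}` plus the new edge
`E = {v_1, u_1, v^1_1, …, v^{k-3}_1, x}`. -/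
def GcircEdges (k t : ℕ) : Finset (Finset (ℕ × ℕ)) :=
  insert ({(0, 1), (1, 1), (0, 0)} ∪ (Finset.Icc 2 (k - 2)).image (fun c => (c, 1)))
    (GktEdges k t)


section Wrap
lemma wrap_pos (n i : ℕ) : 1 ≤ wrap n i := Nat.le_add_left 1 _

lemma wrap_le {n : ℕ} (hn : 1 ≤ n) (i : ℕ) : wrap n i ≤ n := by
  have := Nat.mod_lt (i-1) (show 0 < n by omega)
  unfold wrap; omega

lemma wrap_eq {n i : ℕ} (h1 : 1 ≤ i) (h2 : i ≤ n) : wrap n i = i := by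
  unfold wrap; rw [Nat.mod_eq_of_lt (by omega)]; omega

lemma wrap_add_n {n i : ℕ} (h1 : 1 ≤ i) : wrap n (i + n) = wrap n i := by
  unfold wrap
  rw [show i + n - 1 = (i-1) + n by omega, Nat.add_mod_right]

lemma wrap_wrap_add {n i d : ℕ} (h1 : 1 ≤ i) : wrap n (wrap n i + d) = wrap n (i + d) := by
  unfold wrap
  rw [show (i-1)%n + 1 + d - 1 = (i-1)%n + d by omega, Nat.mod_add_mod,
     show i + d - 1 = (i-1)+d by omega]

lemma wrap_inj {n i i' : ℕ} (hi : 1 ≤ i) (hi2 : i ≤ n) (hi' : 1 ≤ i') (hi2' : i' ≤ n)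
    (h : wrap n i = wrap n i') : i = i' := by
  unfold wrap at h
  rw [Nat.mod_eq_of_lt (by omega), Nat.mod_eq_of_lt (by omega)] at h; omega

lemma wrap_eq_wrap_iff {n a b : ℕ} (ha : 1 ≤ a) (hb : 1 ≤ b) :
    wrap n a = wrap n b ↔ (a - 1) % n = (b - 1) % n := by unfold wrap; omega

lemma wrap_mem_Icc {n : ℕ} (hn : 1 ≤ n) (i : ℕ) : wrap n i ∈ Finset.Icc 1 n := by
  simp [Finset.mem_Icc, wrap_pos, wrap_le hn]

/-- block injectivity: the map (s,l) ↦ wrap (t*k) (j + s*k + l) is injective for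
s < t, l < k, 1 ≤ j. -/
lemma block_inj {k t j s l s' l' : ℕ} (hj : 1 ≤ j) (hs : s < t) (hl : l < k)
    (hs' : s' < t) (hl' : l' < k)
    (h : wrap (t*k) (j + s*k + l) = wrap (t*k) (j + s'*k + l')) : s = s' ∧ l = l' := by
  have hk : 0 < k := by omega
  have hn : 0 < t*k := Nat.mul_pos (by omega) hk
  rw [wrap_eq_wrap_iff (by omega) (by omega)] at h
  rw [show j + s*k + l - 1 = (s*k+l) + (j-1) by omega,
      show j + s'*k + l' - 1 = (s'*k+l') + (j-1) by omega] at h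
  have h2 : (s*k+l) % (t*k) = (s'*k+l') % (t*k) :=
    Nat.ModEq.add_right_cancel' (j-1) h
  have b1 : s*k+l < t*k := by
    calc s*k+l < s*k+k := by omega
    _ = (s+1)*k := by ring
    _ ≤ t*k := Nat.mul_le_mul_right k (by omega)
  have b2 : s'*k+l' < t*k := by
    calc s'*k+l' < s'*k+k := by omega
    _ = (s'+1)*k := by ring
    _ ≤ t*k := Nat.mul_le_mul_right k (by omega)
  rw [Nat.mod_eq_of_lt b1, Nat.mod_eq_of_lt b2] at h2
  have hls : l = l' := by
    have := congrArg (· % k) h2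
    simpa [Nat.mul_add_mod, Nat.add_mul_mod_self_left, Nat.mod_eq_of_lt hl,
      Nat.mod_eq_of_lt hl', Nat.add_comm] using this
  constructor
  · have : s * k = s' * k := by omega
    exact Nat.eq_of_mul_eq_mul_right hk this
  · exact hls

/-- block coverage: each i ∈ [1,n] is wrap (j+s*k+l) for some s<t, l<k. -/
lemma block_cover {k t j i : ℕ} (hk : 0 < k) (ht : 0 < t) (hj : 1 ≤ j) (hj2 : j ≤ t*k)
    (hi : 1 ≤ i) (hi2 : i ≤ t*k) :
    ∃ s < t, ∃ l < k, i = wrap (t*k) (j + s*k + l) := by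
  have hn : 0 < t*k := Nat.mul_pos ht hk
  set q := (i + t*k - j) % (t*k) with hq
  have hql : q < t*k := Nat.mod_lt _ hn
  refine ⟨q / k, ?_, q % k, Nat.mod_lt _ hk, ?_⟩
  · exact Nat.div_lt_of_lt_mul (by rwa [Nat.mul_comm] at hql)
  · rw [show j + q/k*k + q%k = j + q by rw [Nat.add_assoc, Nat.div_add_mod']]
    rw [wrap, show j + q - 1 = (j-1) + q by omega]
    have hmod : (j - 1 + q) % (t*k) = i - 1 := by
      rw [Nat.add_mod (j-1) q, Nat.mod_eq_of_lt hql, ← Nat.add_mod,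
        show j - 1 + (i + t*k - j) = (i-1) + t*k by omega, Nat.add_mod_right,
        Nat.mod_eq_of_lt (by omega)]
    omega

end Wrap
section Membership

def Es (k : ℕ) : Finset (ℕ × ℕ) :=
  {(0, 1), (1, 1), (0, 0)} ∪ (Finset.Icc 2 (k - 2)).image (fun c => (c, 1))

lemma GcircEdges_eq (k t : ℕ) : GcircEdges k t = insert (Es k) (GktEdges k t) := rfl

lemma mem_Es {k : ℕ} {p : ℕ × ℕ} :
    p ∈ Es k ↔ p = (0,1) ∨ p = (1,1) ∨ p = (0,0) ∨ (2 ≤ p.1 ∧ p.1 ≤ k-2 ∧ p.2 = 1) := by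
  simp only [Es, Finset.mem_union, Finset.mem_insert, Finset.mem_singleton,
    Finset.mem_image, Finset.mem_Icc]
  constructor
  · rintro ((h|h|h)|⟨c,⟨h1,h2⟩,rfl⟩) <;> simp_all
  · rintro (h|h|h|⟨h1,h2,h3⟩)
    · exact Or.inl (Or.inl h)
    · exact Or.inl (Or.inr (Or.inl h))
    · exact Or.inl (Or.inr (Or.inr h))
    · exact Or.inr ⟨p.1, ⟨h1,h2⟩, by rw [← h3]⟩

lemma mem_edgeE {k t i : ℕ} {p : ℕ × ℕ} :
    p ∈ edgeE k t i ↔ p = (0,i) ∨ p = (1,i) ∨ p = (0, wrap (t*k) (i+1)) ∨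
      (2 ≤ p.1 ∧ p.1 ≤ k-2 ∧ p.2 = i) := by
  simp only [edgeE, Finset.mem_union, Finset.mem_insert, Finset.mem_singleton,
    Finset.mem_image, Finset.mem_Icc]
  constructor
  · rintro ((h|h|h)|⟨c,⟨h1,h2⟩,rfl⟩) <;> simp_all
  · rintro (h|h|h|⟨h1,h2,h3⟩)
    · exact Or.inl (Or.inl h)
    · exact Or.inl (Or.inr (Or.inl h))
    · exact Or.inl (Or.inr (Or.inr h))
    · exact Or.inr ⟨p.1, ⟨h1,h2⟩, by rw [← h3]⟩

lemma mem_edgeEij {k t i j : ℕ} {p : ℕ × ℕ} :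
    p ∈ edgeEij k t i j ↔ ∃ l < k, p = (j+1, wrap (t*k) (i+l)) := by
  simp only [edgeEij, Finset.mem_image, Finset.mem_range]
  constructor
  · rintro ⟨l, hl, rfl⟩; exact ⟨l, hl, rfl⟩
  · rintro ⟨l, hl, rfl⟩; exact ⟨l, hl, rfl⟩

lemma mem_M {k t : ℕ} {F : Finset (ℕ × ℕ)} :
    F ∈ GcircEdges k t ↔ F = Es k ∨
      (∃ i, 1 ≤ i ∧ i ≤ t*k ∧ F = edgeE k t i) ∨
      (∃ j s, 1 ≤ j ∧ j ≤ k-3 ∧ s < t ∧ F = edgeEij k t (j+s*k) j) := by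
  rw [GcircEdges_eq]
  simp only [GktEdges, Finset.mem_insert, Finset.mem_union, Finset.mem_image,
    Finset.mem_Icc, Finset.mem_product, Finset.mem_range]
  constructor
  · rintro (h | ⟨i,⟨h1,h2⟩,rfl⟩ | ⟨⟨j,s⟩,⟨⟨hj1,hj2⟩,hs⟩,rfl⟩)
    · exact Or.inl h
    · exact Or.inr (Or.inl ⟨i, h1, h2, rfl⟩)
    · exact Or.inr (Or.inr ⟨j, s, hj1, hj2, hs, rfl⟩)
  · rintro (h | ⟨i,h1,h2,rfl⟩ | ⟨j,s,hj1,hj2,hs,rfl⟩)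
    · exact Or.inl h
    · exact Or.inr (Or.inl ⟨i, ⟨h1,h2⟩, rfl⟩)
    · exact Or.inr (Or.inr ⟨⟨j,s⟩, ⟨⟨hj1,hj2⟩,hs⟩, rfl⟩)

lemma mem_X {k t : ℕ} (hk : 3 ≤ k) {p : ℕ × ℕ} :
    p ∈ GcircVerts k t ↔ p = (0,0) ∨ (p.1 ≤ k-2 ∧ 1 ≤ p.2 ∧ p.2 ≤ t*k) := by
  simp only [GcircVerts, GktVerts, Finset.mem_insert, Finset.mem_product,
    Finset.mem_range, Finset.mem_Icc]
  constructor
  · rintro (rfl|⟨h1,h2,h3⟩)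
    · exact Or.inl rfl
    · exact Or.inr ⟨by omega, h2, h3⟩
  · rintro (rfl|⟨h1,h2,h3⟩)
    · exact Or.inl rfl
    · exact Or.inr ⟨by omega, h2, h3⟩

end Membership
section Facts
variable {k t : ℕ}

lemma x_mem_Es : ((0,0) : ℕ × ℕ) ∈ Es k := mem_Es.2 (by tauto)

lemma x_notMem_edgeE {i : ℕ} (hi : 1 ≤ i) : ((0,0) : ℕ × ℕ) ∉ edgeE k t i := by
  rw [mem_edgeE]
  have := wrap_pos (t*k) (i+1)
  rintro ((h|h|h)|⟨h1,h2,h3⟩) <;> simp_all [Prod.ext_iff] <;> omega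

lemma x_notMem_edgeEij {i j : ℕ} : ((0,0) : ℕ × ℕ) ∉ edgeEij k t i j := by
  rw [mem_edgeEij]; rintro ⟨l, hl, h⟩; simp [Prod.ext_iff] at h

lemma u_mem_edgeE_iff {m i : ℕ} : ((1,m) : ℕ × ℕ) ∈ edgeE k t i ↔ m = i := by
  rw [mem_edgeE]
  constructor
  · rintro ((h|h|h)|⟨h1,h2,h3⟩) <;> simp_all [Prod.ext_iff] <;> try omega
  · rintro rfl; tauto

lemma u_mem_Es_iff {m : ℕ} : ((1,m) : ℕ × ℕ) ∈ Es k ↔ m = 1 := by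
  rw [mem_Es]
  constructor
  · rintro ((h|h|h)|⟨h1,h2,h3⟩) <;> simp_all [Prod.ext_iff] <;> try omega
  · rintro rfl; tauto

lemma u_notMem_edgeEij {m i j : ℕ} (hj : 1 ≤ j) : ((1,m) : ℕ × ℕ) ∉ edgeEij k t i j := by
  rw [mem_edgeEij]; rintro ⟨l, hl, h⟩
  have : (1 : ℕ) = j + 1 := congrArg Prod.fst h
  omega

lemma v_mem_edgeE_iff {m i : ℕ} : ((0,m) : ℕ × ℕ) ∈ edgeE k t i ↔ m = i ∨ m = wrap (t*k) (i+1) := by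
  rw [mem_edgeE]
  constructor
  · rintro ((h|h|h)|⟨h1,h2,h3⟩) <;> simp_all [Prod.ext_iff] <;> try omega
  · rintro (rfl|rfl) <;> tauto

lemma v_mem_Es_iff {m : ℕ} : ((0,m) : ℕ × ℕ) ∈ Es k ↔ m = 1 ∨ m = 0 := by
  rw [mem_Es]
  constructor
  · rintro ((h|h|h)|⟨h1,h2,h3⟩) <;> simp_all [Prod.ext_iff] <;> try omega
  · rintro (rfl|rfl) <;> tauto

lemma v_notMem_edgeEij {m i j : ℕ} (hj : 1 ≤ j) : ((0,m) : ℕ × ℕ) ∉ edgeEij k t i j := by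
  rw [mem_edgeEij]; rintro ⟨l, hl, h⟩
  have : (0 : ℕ) = j + 1 := congrArg Prod.fst h
  omega

lemma w_mem_edgeE_iff {c m i : ℕ} (hc : 2 ≤ c) : ((c,m) : ℕ × ℕ) ∈ edgeE k t i ↔
    (c ≤ k - 2 ∧ m = i) := by
  rw [mem_edgeE]
  constructor
  · rintro ((h|h|h)|⟨h1,h2,h3⟩) <;> simp_all [Prod.ext_iff] <;> try omega
  · rintro ⟨h1, rfl⟩; exact Or.inr (Or.inr (Or.inr ⟨hc, h1, rfl⟩))

lemma w_mem_Es_iff {c m : ℕ} (hc : 2 ≤ c) : ((c,m) : ℕ × ℕ) ∈ Es k ↔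
    (c ≤ k - 2 ∧ m = 1) := by
  rw [mem_Es]
  constructor
  · rintro ((h|h|h)|⟨h1,h2,h3⟩) <;> simp_all [Prod.ext_iff] <;> try omega
  · rintro ⟨h1, rfl⟩; exact Or.inr (Or.inr (Or.inr ⟨hc, h1, rfl⟩))

lemma w_mem_edgeEij_iff {c m i j : ℕ} : ((c,m) : ℕ × ℕ) ∈ edgeEij k t i j ↔
    (c = j + 1 ∧ ∃ l < k, m = wrap (t*k) (i+l)) := by
  rw [mem_edgeEij]
  constructor
  · rintro ⟨l, hl, h⟩
    rw [Prod.ext_iff] at h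
    exact ⟨h.1, l, hl, h.2⟩
  · rintro ⟨rfl, l, hl, rfl⟩; exact ⟨l, hl, rfl⟩

lemma Es_ne_edgeE {i : ℕ} (hi : 1 ≤ i) : Es k ≠ edgeE k t i := fun h =>
  x_notMem_edgeE hi (h ▸ x_mem_Es)

lemma Es_ne_edgeEij {i j : ℕ} : Es k ≠ edgeEij k t i j := fun h =>
  x_notMem_edgeEij (h ▸ x_mem_Es)

lemma edgeE_ne_edgeEij {i i' j : ℕ} (hj : 1 ≤ j) : edgeE k t i ≠ edgeEij k t i' j := fun h =>
  u_notMem_edgeEij hj (h ▸ (u_mem_edgeE_iff.2 rfl))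

lemma edgeE_inj {i i' : ℕ} (h : edgeE k t i = edgeE k t i') : i = i' :=
  u_mem_edgeE_iff.1 (h ▸ (u_mem_edgeE_iff (m := i) (i := i)).2 rfl)

lemma block_eq_inj {j s s' : ℕ} (hk : 3 ≤ k) (hj : 1 ≤ j) (hs : s < t) (hs' : s' < t)
    (h : edgeEij k t (j+s*k) j = edgeEij k t (j+s'*k) j) : s = s' := by
  have hmem : ((j+1, wrap (t*k) (j+s*k)) : ℕ × ℕ) ∈ edgeEij k t (j+s*k) j :=
    mem_edgeEij.2 ⟨0, by omega, by simp⟩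
  rw [h, mem_edgeEij] at hmem
  obtain ⟨l, hl, hmem⟩ := hmem
  rw [Prod.ext_iff] at hmem
  have : wrap (t*k) (j+s*k+0) = wrap (t*k) (j+s'*k+l) := by
    rw [Nat.add_zero]; exact hmem.2
  exact (block_inj hj hs (by omega) hs' hl this).1

lemma block_disjoint {j s s' c m : ℕ} (hk : 3 ≤ k) (hj : 1 ≤ j) (hs : s < t) (hs' : s' < t)
    (hne : s ≠ s') (h : ((c,m) : ℕ × ℕ) ∈ edgeEij k t (j+s*k) j) :
    ((c,m) : ℕ × ℕ) ∉ edgeEij k t (j+s'*k) j := by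
  rw [w_mem_edgeEij_iff] at h ⊢
  rintro ⟨-, l', hl', h2⟩
  obtain ⟨-, l, hl, h1⟩ := h
  exact hne (block_inj hj hs hl hs' hl' (h1 ▸ h2 ▸ rfl)).1

end Facts
section Filt
variable {k t : ℕ}

def filt (k t : ℕ) (v : ℕ × ℕ) : Finset (Finset (ℕ × ℕ)) :=
  (GcircEdges k t).filter (fun F => v ∈ F)

lemma mem_filt {v : ℕ × ℕ} {F : Finset (ℕ × ℕ)} :
    F ∈ filt k t v ↔ F ∈ GcircEdges k t ∧ v ∈ F := Finset.mem_filter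

def deg (k t : ℕ) (v : ℕ × ℕ) : ℕ := (filt k t v).card

lemma Es_mem_M : Es k ∈ GcircEdges k t := mem_M.2 (Or.inl rfl)

lemma edgeE_mem_M {i : ℕ} (h1 : 1 ≤ i) (h2 : i ≤ t*k) : edgeE k t i ∈ GcircEdges k t :=
  mem_M.2 (Or.inr (Or.inl ⟨i, h1, h2, rfl⟩))

lemma block_mem_M {j s : ℕ} (h1 : 1 ≤ j) (h2 : j ≤ k-3) (hs : s < t) :
    edgeEij k t (j+s*k) j ∈ GcircEdges k t :=
  mem_M.2 (Or.inr (Or.inr ⟨j, s, h1, h2, hs, rfl⟩))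

lemma wrap_succ_eq_iff {n i' m : ℕ} (hn : 2 ≤ n) (h1 : 1 ≤ i') (h2 : i' ≤ n)
    (hm : 2 ≤ m) (hm2 : m ≤ n) : wrap n (i'+1) = m ↔ i' = m - 1 := by
  rcases Nat.lt_or_ge i' n with h|h
  · rw [wrap_eq (by omega) (by omega)]; omega
  · have h3 : i' = n := by omega
    rw [h3, show n + 1 = 1 + n by omega, wrap_add_n (by omega), wrap_eq (by omega) (by omega)]
    omega

lemma wrap_succ_eq_one_iff {n i' : ℕ} (hn : 2 ≤ n) (h1 : 1 ≤ i') (h2 : i' ≤ n) :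
    wrap n (i'+1) = 1 ↔ i' = n := by
  rcases Nat.lt_or_ge i' n with h|h
  · rw [wrap_eq (by omega) (by omega)]; omega
  · have h3 : i' = n := by omega
    rw [h3, show n + 1 = 1 + n by omega, wrap_add_n (by omega), wrap_eq (by omega) (by omega)]
    omega

lemma hn_ge {k t : ℕ} (hk : 3 ≤ k) (ht : 1 ≤ t) : 3 ≤ t * k :=
  le_trans hk (Nat.le_mul_of_pos_left k ht)

lemma filt_x (hk : 3 ≤ k) (ht : 1 ≤ t) : filt k t (0,0) = {Es k} := by
  ext F
  rw [mem_filt, Finset.mem_singleton]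
  constructor
  · rintro ⟨hM, hx⟩
    rcases mem_M.1 hM with rfl|⟨i,h1,h2,rfl⟩|⟨j,s,hj1,hj2,hs,rfl⟩
    · rfl
    · exact absurd hx (x_notMem_edgeE h1)
    · exact absurd hx x_notMem_edgeEij
  · rintro rfl; exact ⟨Es_mem_M, x_mem_Es⟩

lemma filt_u1 (hk : 3 ≤ k) (ht : 1 ≤ t) : filt k t (1,1) = {Es k, edgeE k t 1} := by
  have hn := hn_ge hk ht
  ext F
  rw [mem_filt, Finset.mem_insert, Finset.mem_singleton]
  constructor
  · rintro ⟨hM, hx⟩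
    rcases mem_M.1 hM with rfl|⟨i,h1,h2,rfl⟩|⟨j,s,hj1,hj2,hs,rfl⟩
    · exact Or.inl rfl
    · rw [u_mem_edgeE_iff] at hx; exact Or.inr (by rw [← hx])
    · exact absurd hx (u_notMem_edgeEij hj1)
  · rintro (rfl|rfl)
    · exact ⟨Es_mem_M, u_mem_Es_iff.2 rfl⟩
    · exact ⟨edgeE_mem_M (by omega) (by omega), u_mem_edgeE_iff.2 rfl⟩

lemma filt_u {i : ℕ} (hk : 3 ≤ k) (ht : 1 ≤ t) (h1 : 2 ≤ i) (h2 : i ≤ t*k) :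
    filt k t (1,i) = {edgeE k t i} := by
  ext F
  rw [mem_filt, Finset.mem_singleton]
  constructor
  · rintro ⟨hM, hx⟩
    rcases mem_M.1 hM with rfl|⟨i',h1',h2',rfl⟩|⟨j,s,hj1,hj2,hs,rfl⟩
    · rw [u_mem_Es_iff] at hx; omega
    · rw [u_mem_edgeE_iff] at hx; rw [hx]
    · exact absurd hx (u_notMem_edgeEij hj1)
  · rintro rfl; exact ⟨edgeE_mem_M (by omega) h2, u_mem_edgeE_iff.2 rfl⟩

lemma filt_v1 (hk : 3 ≤ k) (ht : 1 ≤ t) :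
    filt k t (0,1) = {Es k, edgeE k t 1, edgeE k t (t*k)} := by
  have hn := hn_ge hk ht
  ext F
  rw [mem_filt, Finset.mem_insert, Finset.mem_insert, Finset.mem_singleton]
  constructor
  · rintro ⟨hM, hx⟩
    rcases mem_M.1 hM with rfl|⟨i',h1',h2',rfl⟩|⟨j,s,hj1,hj2,hs,rfl⟩
    · exact Or.inl rfl
    · rw [v_mem_edgeE_iff] at hx
      rcases hx with h|h
      · exact Or.inr (Or.inl (by rw [← h]))
      · rw [eq_comm, wrap_succ_eq_one_iff (by omega) h1' h2'] at h
        exact Or.inr (Or.inr (by rw [h]))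
    · exact absurd hx (v_notMem_edgeEij hj1)
  · rintro (rfl|rfl|rfl)
    · exact ⟨Es_mem_M, v_mem_Es_iff.2 (Or.inl rfl)⟩
    · exact ⟨edgeE_mem_M (by omega) (by omega), v_mem_edgeE_iff.2 (Or.inl rfl)⟩
    · exact ⟨edgeE_mem_M (by omega) (le_refl _), v_mem_edgeE_iff.2 (Or.inr
        ((wrap_succ_eq_one_iff (by omega) (by omega) (le_refl _)).2 rfl).symm)⟩

lemma filt_v {i : ℕ} (hk : 3 ≤ k) (ht : 1 ≤ t) (h1 : 2 ≤ i) (h2 : i ≤ t*k) :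
    filt k t (0,i) = {edgeE k t (i-1), edgeE k t i} := by
  have hn := hn_ge hk ht
  ext F
  rw [mem_filt, Finset.mem_insert, Finset.mem_singleton]
  constructor
  · rintro ⟨hM, hx⟩
    rcases mem_M.1 hM with rfl|⟨i',h1',h2',rfl⟩|⟨j,s,hj1,hj2,hs,rfl⟩
    · rw [v_mem_Es_iff] at hx; omega
    · rw [v_mem_edgeE_iff] at hx
      rcases hx with h|h
      · exact Or.inr (by rw [← h])
      · rw [eq_comm, wrap_succ_eq_iff (by omega) h1' h2' h1 h2] at h
        exact Or.inl (by rw [h])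
    · exact absurd hx (v_notMem_edgeEij hj1)
  · rintro (rfl|rfl)
    · exact ⟨edgeE_mem_M (by omega) (by omega), v_mem_edgeE_iff.2 (Or.inr
        ((wrap_succ_eq_iff (by omega) (by omega) (by omega) h1 h2).2 rfl).symm)⟩
    · exact ⟨edgeE_mem_M (by omega) h2, v_mem_edgeE_iff.2 (Or.inl rfl)⟩

lemma filt_w {c i : ℕ} (hk : 3 ≤ k) (ht : 1 ≤ t) (hc : 2 ≤ c) (hc2 : c ≤ k-2)
    (hi : 1 ≤ i) (hi2 : i ≤ t*k) :
    ∃ s < t, ((c,i) : ℕ×ℕ) ∈ edgeEij k t ((c-1)+s*k) (c-1) ∧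
      filt k t (c,i) = (if i = 1 then {Es k, edgeE k t 1, edgeEij k t ((c-1)+s*k) (c-1)}
        else {edgeE k t i, edgeEij k t ((c-1)+s*k) (c-1)}) := by
  have hn := hn_ge hk ht
  have hkn : k ≤ t*k := Nat.le_mul_of_pos_left k ht
  obtain ⟨s, hs, l, hl, hil⟩ := block_cover (j := c-1) (i := i)
    (by omega) (by omega) (by omega) (by omega) hi hi2
  refine ⟨s, hs, w_mem_edgeEij_iff.2 ⟨by omega, l, hl, hil⟩, ?_⟩
  ext F
  rw [mem_filt]
  constructor
  · rintro ⟨hM, hx⟩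
    rcases mem_M.1 hM with rfl|⟨i',h1',h2',rfl⟩|⟨j,s',hj1,hj2,hs',rfl⟩
    · rw [w_mem_Es_iff hc] at hx
      rw [hx.2]; simp
    · rw [w_mem_edgeE_iff hc] at hx
      rw [← hx.2]
      split
      · rename_i h5; rw [h5]; simp
      · simp
    · rw [w_mem_edgeEij_iff] at hx
      obtain ⟨hcj, l', hl', hil'⟩ := hx
      have hj : j = c - 1 := by omega
      subst hj
      have : s' = s := by
        have := block_inj (by omega : 1 ≤ c-1) hs' hl' hs hl (by rw [← hil', ← hil])
        omega
      subst this
      split <;> simp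
  · have hBmem : edgeEij k t (c - 1 + s * k) (c-1) ∈ GcircEdges k t :=
      block_mem_M (by omega) (by omega) hs
    have hBx : ((c,i) : ℕ×ℕ) ∈ edgeEij k t (c - 1 + s * k) (c-1) :=
      w_mem_edgeEij_iff.2 ⟨by omega, l, hl, hil⟩
    split
    · rename_i hi1
      simp only [Finset.mem_insert, Finset.mem_singleton]
      rintro (rfl|rfl|rfl)
      · exact ⟨Es_mem_M, w_mem_Es_iff hc |>.2 ⟨hc2, hi1⟩⟩
      · exact ⟨edgeE_mem_M (by omega) (by omega), w_mem_edgeE_iff hc |>.2 ⟨hc2, hi1⟩⟩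
      · exact ⟨hBmem, hBx⟩
    · simp only [Finset.mem_insert, Finset.mem_singleton]
      rintro (rfl|rfl)
      · exact ⟨edgeE_mem_M hi hi2, w_mem_edgeE_iff hc |>.2 ⟨hc2, rfl⟩⟩
      · exact ⟨hBmem, hBx⟩

end Filt
section Deg
variable {k t : ℕ}

lemma card_pair' {α : Type*} [DecidableEq α] {a b : α} (h : a ≠ b) :
    ({a, b} : Finset α).card = 2 := by
  rw [Finset.card_insert_of_notMem (by simp [h]), Finset.card_singleton]

lemma card_triple {α : Type*} [DecidableEq α] {a b c : α} (h1 : a ≠ b) (h2 : a ≠ c)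
    (h3 : b ≠ c) : ({a, b, c} : Finset α).card = 3 := by
  rw [Finset.card_insert_of_notMem (by simp [h1, h2]), card_pair' h3]

lemma deg_x (hk : 3 ≤ k) (ht : 1 ≤ t) : deg k t (0,0) = 1 := by
  rw [deg, filt_x hk ht, Finset.card_singleton]

lemma deg_u1 (hk : 3 ≤ k) (ht : 1 ≤ t) : deg k t (1,1) = 2 := by
  rw [deg, filt_u1 hk ht, card_pair' (Es_ne_edgeE (by omega))]

lemma deg_u {i : ℕ} (hk : 3 ≤ k) (ht : 1 ≤ t) (h1 : 2 ≤ i) (h2 : i ≤ t*k) :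
    deg k t (1,i) = 1 := by
  rw [deg, filt_u hk ht h1 h2, Finset.card_singleton]

lemma deg_v1 (hk : 3 ≤ k) (ht : 1 ≤ t) : deg k t (0,1) = 3 := by
  have hn := hn_ge hk ht
  rw [deg, filt_v1 hk ht]
  refine card_triple (Es_ne_edgeE (by omega)) (Es_ne_edgeE (by omega)) ?_
  intro h
  have := edgeE_inj h
  omega

lemma deg_v {i : ℕ} (hk : 3 ≤ k) (ht : 1 ≤ t) (h1 : 2 ≤ i) (h2 : i ≤ t*k) :
    deg k t (0,i) = 2 := by
  rw [deg, filt_v hk ht h1 h2]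
  refine card_pair' ?_
  intro h
  have := edgeE_inj h
  omega

lemma deg_w {c i : ℕ} (hk : 3 ≤ k) (ht : 1 ≤ t) (hc : 2 ≤ c) (hc2 : c ≤ k-2)
    (hi : 1 ≤ i) (hi2 : i ≤ t*k) :
    deg k t (c,i) = if i = 1 then 3 else 2 := by
  have hn := hn_ge hk ht
  obtain ⟨s, hs, hmem, hfilt⟩ := filt_w hk ht hc hc2 hi hi2
  rw [deg, hfilt]
  split
  · refine card_triple (Es_ne_edgeE (by omega)) Es_ne_edgeEij
      (edgeE_ne_edgeEij (by omega))
  · exact card_pair' (edgeE_ne_edgeEij (by omega))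

lemma deg_table (hk : 3 ≤ k) (ht : 1 ≤ t) {p : ℕ × ℕ} (hp : p ∈ GcircVerts k t) :
    (p = (0,0) ∧ deg k t p = 1) ∨
    (p = (0,1) ∧ deg k t p = 3) ∨ (p = (1,1) ∧ deg k t p = 2) ∨
    (∃ c, 2 ≤ c ∧ c ≤ k-2 ∧ p = (c,1) ∧ deg k t p = 3) ∨
    (∃ i, 2 ≤ i ∧ i ≤ t*k ∧ p = (0,i) ∧ deg k t p = 2) ∨
    (∃ i, 2 ≤ i ∧ i ≤ t*k ∧ p = (1,i) ∧ deg k t p = 1) ∨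
    (∃ c i, 2 ≤ c ∧ c ≤ k-2 ∧ 2 ≤ i ∧ i ≤ t*k ∧ p = (c,i) ∧ deg k t p = 2) := by
  obtain ⟨c, i⟩ := p
  rcases (mem_X hk).1 hp with h|⟨h1, h2, h3⟩
  · exact Or.inl ⟨h, h ▸ deg_x hk ht⟩
  · simp only at h1 h2 h3
    rcases Nat.lt_or_ge c 2 with hc|hc
    · interval_cases c
      · rcases Nat.eq_or_lt_of_le h2 with h4|h4
        · exact Or.inr (Or.inl ⟨by rw [← h4], by rw [← h4]; exact deg_v1 hk ht⟩)
        · exact Or.inr (Or.inr (Or.inr (Or.inr (Or.inl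
            ⟨i, by omega, h3, rfl, deg_v hk ht (by omega) h3⟩))))
      · rcases Nat.eq_or_lt_of_le h2 with h4|h4
        · exact Or.inr (Or.inr (Or.inl ⟨by rw [← h4], by rw [← h4]; exact deg_u1 hk ht⟩))
        · exact Or.inr (Or.inr (Or.inr (Or.inr (Or.inr (Or.inl
            ⟨i, by omega, h3, rfl, deg_u hk ht (by omega) h3⟩)))))
    · rcases Nat.eq_or_lt_of_le h2 with h4|h4
      · refine Or.inr (Or.inr (Or.inr (Or.inl ⟨c, hc, h1, by rw [← h4], ?_⟩)))
        rw [← h4, deg_w hk ht hc h1 (by omega) (by omega), if_pos rfl]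
      · refine Or.inr (Or.inr (Or.inr (Or.inr (Or.inr (Or.inr
          ⟨c, i, hc, h1, by omega, h3, rfl, ?_⟩)))))
        rw [deg_w hk ht hc h1 (by omega) h3, if_neg (by omega)]

lemma block_vertex_form {i j : ℕ} (hj : 1 ≤ j) (hj2 : j ≤ k - 3) {p : ℕ × ℕ}
    (hp : p ∈ edgeEij k t i j) (hk : 3 ≤ k) (ht : 1 ≤ t) :
    p.1 = j + 1 ∧ 1 ≤ p.2 ∧ p.2 ≤ t*k := by
  obtain ⟨l, hl, rfl⟩ := mem_edgeEij.1 hp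
  have hn := hn_ge hk ht
  exact ⟨rfl, wrap_pos _ _, wrap_le (by omega) _⟩

lemma block_member_deg {i j : ℕ} (hk : 3 ≤ k) (ht : 1 ≤ t) (hj : 1 ≤ j) (hj2 : j ≤ k - 3)
    {p : ℕ × ℕ} (hp : p ∈ edgeEij k t i j) : 2 ≤ deg k t p := by
  obtain ⟨h1, h2, h3⟩ := block_vertex_form hj hj2 hp hk ht
  obtain ⟨c, m⟩ := p
  simp only at h1 h2 h3
  subst h1
  rw [deg_w hk ht (by omega) (by omega) h2 h3]
  split <;> omega

end Deg

section Auto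
variable {k t : ℕ} {σ : Equiv.Perm (ℕ × ℕ)}

lemma filt_map (hA : IsAuto (GcircVerts k t) (GcircEdges k t) σ) (v : ℕ × ℕ) :
    (filt k t v).image (Finset.image σ) = filt k t (σ v) := by
  ext G
  simp only [Finset.mem_image]
  constructor
  · rintro ⟨F, hF, rfl⟩
    rw [mem_filt] at hF ⊢
    exact ⟨(hA.2 F).1 hF.1, Finset.mem_image_of_mem σ hF.2⟩
  · intro hG
    rw [mem_filt] at hG
    refine ⟨G.image σ.symm, ?_, ?_⟩
    · rw [mem_filt]
      refine ⟨?_, ?_⟩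
      · rw [hA.2 (G.image σ.symm), Finset.image_image,
          show (⇑σ ∘ ⇑σ.symm) = id from funext (σ.apply_symm_apply), Finset.image_id]
        exact hG.1
      · have := Finset.mem_image_of_mem σ.symm hG.2
        rwa [Equiv.symm_apply_apply] at this
    · rw [Finset.image_image,
        show (⇑σ ∘ ⇑σ.symm) = id from funext (σ.apply_symm_apply), Finset.image_id]

lemma deg_map (hA : IsAuto (GcircVerts k t) (GcircEdges k t) σ) (v : ℕ × ℕ) :
    deg k t (σ v) = deg k t v := by
  rw [deg, ← filt_map hA, Finset.card_image_of_injective _ (Finset.image_injective σ.injective), deg]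

lemma sigma_mem_X (hA : IsAuto (GcircVerts k t) (GcircEdges k t) σ) {v : ℕ × ℕ}
    (h : v ∈ GcircVerts k t) : σ v ∈ GcircVerts k t := by
  by_contra h2
  have h3 := hA.1 _ h2
  have := σ.injective h3
  rw [this] at h2
  exact h2 h

lemma image_pair {α β : Type*} [DecidableEq α] [DecidableEq β] (f : α → β) (A B : α) :
    ({A, B} : Finset α).image f = {f A, f B} := by simp

lemma image_triple {α β : Type*} [DecidableEq α] [DecidableEq β] (f : α → β) (A B C : α) :
    ({A, B, C} : Finset α).image f = {f A, f B, f C} := by simp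

end Auto
section Twin

lemma swap_image_eq {α : Type*} [DecidableEq α] {F : Finset α} {a b : α}
    (h : a ∈ F ↔ b ∈ F) : F.image (Equiv.swap a b) = F := by
  have key : ∀ x, Equiv.swap a b x ∈ F ↔ x ∈ F := by
    intro x
    rcases eq_or_ne x a with rfl|hxa
    · rw [Equiv.swap_apply_left]; exact h.symm
    rcases eq_or_ne x b with rfl|hxb
    · rw [Equiv.swap_apply_right]; exact h
    · rw [Equiv.swap_apply_of_ne_of_ne hxa hxb]
  ext x
  simp only [Finset.mem_image]
  constructor
  · rintro ⟨y, hy, rfl⟩; exact (key y).2 hy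
  · intro hx
    exact ⟨Equiv.swap a b x, (key x).2 hx, Equiv.swap_apply_self a b x⟩

lemma twin_auto {X' : Finset (ℕ×ℕ)} {M' : Finset (Finset (ℕ×ℕ))} {a b : ℕ×ℕ}
    (ha : a ∈ X') (hb : b ∈ X') (hab : a ≠ b)
    (h : ∀ F ∈ M', (a ∈ F ↔ b ∈ F)) :
    ∃ σ : Equiv.Perm (ℕ×ℕ), IsAuto X' M' σ ∧ σ ≠ 1 := by
  refine ⟨Equiv.swap a b, ⟨?_, ?_⟩, ?_⟩
  · intro v hv
    exact Equiv.swap_apply_of_ne_of_ne (fun e => hv (e ▸ ha)) (fun e => hv (e ▸ hb))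
  · intro F
    constructor
    · intro hF; rwa [swap_image_eq (h F hF)]
    · intro hF
      have h3 : F = F.image (Equiv.swap a b) := by
        conv_lhs => rw [show F = (F.image (Equiv.swap a b)).image (Equiv.swap a b) by
          rw [Finset.image_image,
            show (⇑(Equiv.swap a b) ∘ ⇑(Equiv.swap a b)) = id from
              funext (Equiv.swap_apply_self a b), Finset.image_id]]
        rw [swap_image_eq (h _ hF)]
      rw [h3]; exact hF
  · intro e
    have : Equiv.swap a b a = a := by rw [e]; rfl
    rw [Equiv.swap_apply_left] at this
    exact hab this.symm

/-- Boundary existence on the cycle. -/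
lemma boundary {k t : ℕ} {M' : Finset (Finset (ℕ×ℕ))} (hk : 3 ≤ k) (ht : 1 ≤ t)
    {i0 i1 : ℕ} (h01 : 1 ≤ i0) (h02 : i0 ≤ t*k) (h11 : 1 ≤ i1) (h12 : i1 ≤ t*k)
    (habs : edgeE k t i0 ∉ M') (hpres : edgeE k t i1 ∈ M') :
    ∃ i, 1 ≤ i ∧ i ≤ t*k ∧ edgeE k t i ∉ M' ∧ edgeE k t (wrap (t*k) (i+1)) ∈ M' := by
  have hn := hn_ge hk ht
  set P : ℕ → Prop := fun d => edgeE k t (wrap (t*k) (i0 + d)) ∈ M' with hP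
  have hex : ∃ d, P d := by
    refine ⟨(i1 + t*k - i0) % (t*k), ?_⟩
    have h5 : (i0 - 1 + (i1 + t*k - i0) % (t*k)) % (t*k)
        = (i0 - 1 + (i1 + t*k - i0)) % (t*k) :=
      Nat.ModEq.add_left (i0-1) (Nat.mod_modEq _ _)
    have : wrap (t*k) (i0 + (i1 + t*k - i0) % (t*k)) = i1 := by
      rw [wrap,
        show i0 + (i1 + t*k - i0) % (t*k) - 1 = i0 - 1 + (i1 + t*k - i0) % (t*k) by omega,
        h5, show i0 - 1 + (i1 + t*k - i0) = i1 - 1 + t*k by omega, Nat.add_mod_right,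
        Nat.mod_eq_of_lt (by omega)]
      omega
    rw [hP]; simpa [this] using hpres
  have hd0 : ¬ P 0 := by
    rw [hP]
    simpa [Nat.add_zero, wrap_eq h01 h02] using habs
  classical
  let d := Nat.find hex
  have hPd : P d := Nat.find_spec hex
  have hd1 : 1 ≤ d := by
    rcases Nat.eq_zero_or_pos d with h|h
    · exact absurd (h ▸ hPd) hd0
    · exact h
  have hnd : ¬ P (d-1) := Nat.find_min hex (by omega)
  refine ⟨wrap (t*k) (i0 + (d-1)), wrap_pos _ _, wrap_le (by omega) _, hnd, ?_⟩
  rw [wrap_wrap_add (by omega), show i0 + (d-1) + 1 = i0 + d by omega]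
  exact hPd

end Twin
section Rot
variable {k t : ℕ}

def rotF (k t r : ℕ) (p : ℕ×ℕ) : ℕ×ℕ :=
  if p.1 ≤ k - 2 ∧ 1 ≤ p.2 ∧ p.2 ≤ t*k then (p.1, wrap (t*k) (p.2 + r)) else p

lemma rotF_apply {r c i : ℕ} (hc : c ≤ k-2) (h1 : 1 ≤ i) (h2 : i ≤ t*k) :
    rotF k t r (c, i) = (c, wrap (t*k) (i + r)) := by
  rw [rotF, if_pos ⟨hc, h1, h2⟩]

lemma rotF_inv (hk : 3 ≤ k) (ht : 1 ≤ t) {r1 r2 : ℕ} (hr : r1 + r2 = t*k) :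
    Function.LeftInverse (rotF k t r2) (rotF k t r1) := by
  intro p
  obtain ⟨c, i⟩ := p
  by_cases h : c ≤ k - 2 ∧ 1 ≤ i ∧ i ≤ t*k
  · obtain ⟨hc, h1, h2⟩ := h
    have hn := hn_ge hk ht
    rw [rotF_apply hc h1 h2,
      rotF_apply hc (wrap_pos _ _) (wrap_le (by omega) _),
      wrap_wrap_add (by omega), show i + r1 + r2 = i + t*k by omega,
      wrap_add_n h1, wrap_eq h1 h2]
  · have e : rotF k t r1 (c,i) = (c,i) := by rw [rotF, if_neg h]
    rw [e, rotF, if_neg h]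

def rot (k t r : ℕ) (hk : 3 ≤ k) (ht : 1 ≤ t) (hr : r ≤ t*k) : Equiv.Perm (ℕ×ℕ) :=
  ⟨rotF k t r, rotF k t (t*k - r), rotF_inv hk ht (by omega), rotF_inv hk ht (by omega)⟩

lemma rot_apply {r : ℕ} {hk : 3 ≤ k} {ht : 1 ≤ t} {hr : r ≤ t*k} (p : ℕ×ℕ) :
    rot k t r hk ht hr p = rotF k t r p := rfl

lemma rot_edgeE {r i : ℕ} (hk : 3 ≤ k) (ht : 1 ≤ t) (hr : r ≤ t*k)
    (h1 : 1 ≤ i) (h2 : i ≤ t*k) :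
    (edgeE k t i).image (rot k t r hk ht hr) = edgeE k t (wrap (t*k) (i + r)) := by
  have hn := hn_ge hk ht
  rw [edgeE, edgeE, Finset.image_union]
  congr 1
  · rw [Finset.image_insert, Finset.image_insert, Finset.image_singleton]
    rw [rot_apply, rot_apply, rot_apply,
      rotF_apply (by omega) h1 h2, rotF_apply (by omega) h1 h2,
      rotF_apply (by omega) (wrap_pos _ _) (wrap_le (by omega) _),
      wrap_wrap_add (by omega), wrap_wrap_add (by omega),
      show i + 1 + r = i + r + 1 by omega]
  · rw [Finset.image_image]
    apply Finset.image_congr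
    intro c hc
    rw [Finset.mem_coe, Finset.mem_Icc] at hc
    simp only [Function.comp_apply]
    rw [rot_apply, rotF_apply (by omega) h1 h2]

lemma rot_edgeEij {r i j : ℕ} (hk : 3 ≤ k) (ht : 1 ≤ t) (hr : r ≤ t*k)
    (h1 : 1 ≤ i) (hj : 1 ≤ j) (hj2 : j ≤ k - 3) :
    (edgeEij k t i j).image (rot k t r hk ht hr) = edgeEij k t (i + r) j := by
  have hn := hn_ge hk ht
  rw [edgeEij, edgeEij, Finset.image_image]
  apply Finset.image_congr
  intro l hl
  rw [Finset.mem_coe, Finset.mem_range] at hl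
  simp only [Function.comp_apply]
  rw [rot_apply, rotF_apply (by omega) (wrap_pos _ _) (wrap_le (by omega) _),
    wrap_wrap_add (by omega), show i + l + r = i + r + l by omega]

lemma edgeEij_shift_n {i j : ℕ} (h1 : 1 ≤ i) :
    edgeEij k t (i + t*k) j = edgeEij k t i j := by
  rw [edgeEij, edgeEij]
  apply Finset.image_congr
  intro l hl
  dsimp only
  rw [show i + t*k + l = (i + l) + t*k by omega, wrap_add_n (by omega)]

end Rot
section Part2
variable {k t : ℕ}

lemma wrap_succ_inj {n i i' : ℕ} (h1 : 1 ≤ i) (h2 : i ≤ n) (h1' : 1 ≤ i') (h2' : i' ≤ n)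
    (h : wrap n (i+1) = wrap n (i'+1)) : i = i' := by
  rw [wrap_eq_wrap_iff (by omega) (by omega)] at h
  simp only [Nat.add_sub_cancel] at h
  rcases Nat.lt_or_ge i n with hi|hi <;> rcases Nat.lt_or_ge i' n with hi'|hi'
  · rwa [Nat.mod_eq_of_lt hi, Nat.mod_eq_of_lt hi'] at h
  · have : i' = n := by omega
    rw [Nat.mod_eq_of_lt hi, this, Nat.mod_self] at h; omega
  · have : i = n := by omega
    rw [this, Nat.mod_self, Nat.mod_eq_of_lt hi'] at h; omega
  · omega

lemma mem_X'_of_edge {X' : Finset (ℕ×ℕ)} {M' : Finset (Finset (ℕ×ℕ))}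
    (hM : ∀ E ∈ M', E ∈ GcircEdges k t ∧ E ⊆ X') {F : Finset (ℕ×ℕ)} (hF : F ∈ M')
    {p : ℕ×ℕ} (hp : p ∈ F) : p ∈ X' := (hM F hF).2 hp

lemma blocktwin (hk : 3 ≤ k) (ht1 : 1 ≤ t) {X' : Finset (ℕ×ℕ)} {M' : Finset (Finset (ℕ×ℕ))}
    (hM : ∀ E ∈ M', E ∈ GcircEdges k t ∧ E ⊆ X')
    (hE1 : ∀ i, 1 ≤ i → i ≤ t*k → edgeE k t i ∉ M')
    {j s : ℕ} (hj1 : 1 ≤ j) (hj2 : j ≤ k-3) (hs : s < t)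
    (hBm : edgeEij k t (j+s*k) j ∈ M')
    {l1 l2 : ℕ} (hl1 : l1 < k) (hl2 : l2 < k) (hl12 : l1 ≠ l2)
    (hw1 : wrap (t*k) (j+s*k+l1) ≠ 1) (hw2 : wrap (t*k) (j+s*k+l2) ≠ 1) :
    ∃ σ : Equiv.Perm (ℕ×ℕ), IsAuto X' M' σ ∧ σ ≠ 1 := by
  have hamem : ((j+1, wrap (t*k) (j+s*k+l1)) : ℕ×ℕ) ∈ edgeEij k t (j+s*k) j :=
    mem_edgeEij.2 ⟨l1, hl1, rfl⟩
  have hbmem : ((j+1, wrap (t*k) (j+s*k+l2)) : ℕ×ℕ) ∈ edgeEij k t (j+s*k) j :=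
    mem_edgeEij.2 ⟨l2, hl2, rfl⟩
  refine twin_auto (mem_X'_of_edge hM hBm hamem) (mem_X'_of_edge hM hBm hbmem) ?_ ?_
  · intro e
    rw [Prod.ext_iff] at e
    exact hl12 (block_inj hj1 hs hl1 hs hl2 e.2).2
  · intro F hF
    rcases mem_M.1 (hM F hF).1 with rfl|⟨i',h1',h2',rfl⟩|⟨j',s',hj1',hj2',hs',rfl⟩
    · rw [w_mem_Es_iff (by omega), w_mem_Es_iff (by omega)]
      constructor
      · rintro ⟨-, h⟩; exact absurd h hw1
      · rintro ⟨-, h⟩; exact absurd h hw2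
    · exact absurd hF (hE1 i' h1' h2')
    · rw [w_mem_edgeEij_iff, w_mem_edgeEij_iff]
      constructor
      · rintro ⟨he, l', hl', hee⟩
        have hjj : j' = j := by omega
        subst hjj
        have := block_inj hj1 hs hl1 hs' hl' hee
        have hss : s' = s := this.1.symm
        subst hss
        exact ⟨he, l2, hl2, rfl⟩
      · rintro ⟨he, l', hl', hee⟩
        have hjj : j' = j := by omega
        subst hjj
        have := block_inj hj1 hs hl2 hs' hl' hee
        have hss : s' = s := this.1.symm
        subst hss
        exact ⟨he, l1, hl1, rfl⟩

lemma part2 (hk : 3 ≤ k) (ht : k - 2 ≤ t)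
    (X' : Finset (ℕ × ℕ)) (M' : Finset (Finset (ℕ × ℕ)))
    (hsub : X' ⊆ GcircVerts k t) (hM : ∀ E ∈ M', E ∈ GcircEdges k t ∧ E ⊆ X')
    (hcard : 2 ≤ X'.card) (hne : ¬(X' = GcircVerts k t ∧ M' = GcircEdges k t)) :
    ∃ σ : Equiv.Perm (ℕ × ℕ), IsAuto X' M' σ ∧ σ ≠ 1 := by
  have ht1 : 1 ≤ t := le_trans (by omega) ht
  have hn := hn_ge hk ht1
  have hkn : k ≤ t*k := Nat.le_mul_of_pos_left k ht1
  classical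
  by_cases hE : ∀ i, 1 ≤ i → i ≤ t*k → edgeE k t i ∈ M'
  · by_cases hB : ∀ j s, 1 ≤ j → j ≤ k-3 → s < t → edgeEij k t (j+s*k) j ∈ M'
    · -- rotation case
      have hEs : Es k ∉ M' := by
        intro hEs
        apply hne
        have hM'M : M' = GcircEdges k t := by
          apply Finset.Subset.antisymm
          · intro F hF; exact (hM F hF).1
          · intro F hF
            rcases mem_M.1 hF with rfl|⟨i,h1,h2,rfl⟩|⟨j,s,hj1,hj2,hs,rfl⟩
            · exact hEs
            · exact hE i h1 h2
            · exact hB j s hj1 hj2 hs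
        refine ⟨Finset.Subset.antisymm hsub ?_, hM'M⟩
        intro p hp
        rcases (mem_X hk).1 hp with rfl|⟨h1,h2,h3⟩
        · exact (hM _ hEs).2 x_mem_Es
        · obtain ⟨c,i⟩ := p
          simp only at h1 h2 h3
          have hXE := (hM _ (hE i h2 h3)).2
          rcases Nat.lt_or_ge c 2 with hc|hc
          · interval_cases c
            · exact hXE (v_mem_edgeE_iff.2 (Or.inl rfl))
            · exact hXE (u_mem_edgeE_iff.2 rfl)
          · exact hXE ((w_mem_edgeE_iff hc).2 ⟨h1, rfl⟩)
      set r := if k = 3 then 1 else k with hrdef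
      have hr1 : 1 ≤ r := by rw [hrdef]; split <;> omega
      have hrn : r + 1 ≤ t*k := by
        rw [hrdef]; split
        · omega
        · rename_i h
          have h2t : 2 ≤ t := by omega
          calc k + 1 ≤ 2*k := by omega
          _ ≤ t*k := Nat.mul_le_mul_right k h2t
      have hr : r ≤ t*k := by omega
      refine ⟨rot k t r hk ht1 hr, ⟨?_, ?_⟩, ?_⟩
      · intro v hv
        rw [rot_apply, rotF]
        split
        · rename_i hreg
          exfalso
          apply hv
          obtain ⟨c, i⟩ := v
          obtain ⟨h1, h2, h3⟩ := hreg
          have hXE := (hM _ (hE i h2 h3)).2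
          rcases Nat.lt_or_ge c 2 with hc|hc
          · interval_cases c
            · exact hXE (v_mem_edgeE_iff.2 (Or.inl rfl))
            · exact hXE (u_mem_edgeE_iff.2 rfl)
          · exact hXE ((w_mem_edgeE_iff hc).2 ⟨h1, rfl⟩)
        · rfl
      · have fwd : ∀ F ∈ M', F.image (rot k t r hk ht1 hr) ∈ M' := by
          intro F hF
          rcases mem_M.1 (hM F hF).1 with rfl|⟨i,h1,h2,rfl⟩|⟨j,s,hj1,hj2,hs,rfl⟩
          · exact absurd hF hEs
          · rw [rot_edgeE hk ht1 hr h1 h2]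
            exact hE _ (wrap_pos _ _) (wrap_le (by omega) _)
          · have hk4 : k ≠ 3 := by omega
            have hrk : r = k := by rw [hrdef, if_neg hk4]
            rw [rot_edgeEij hk ht1 hr (by omega) hj1 hj2, hrk]
            rcases Nat.lt_or_ge (s+1) t with hs'|hs'
            · rw [show j + s*k + k = j + (s+1)*k by ring]
              exact hB j (s+1) hj1 hj2 hs'
            · have hst : s + 1 = t := by omega
              rw [show j + s*k + k = j + t*k by rw [← hst]; ring]
              rw [edgeEij_shift_n (by omega)]
              have := hB j 0 hj1 hj2 (by omega)
              rwa [Nat.zero_mul, Nat.add_zero] at this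
        have surj : ∀ F ∈ M', ∃ F' ∈ M', F'.image (rot k t r hk ht1 hr) = F := by
          intro F hF
          rcases mem_M.1 (hM F hF).1 with rfl|⟨i,h1,h2,rfl⟩|⟨j,s,hj1,hj2,hs,rfl⟩
          · exact absurd hF hEs
          · refine ⟨edgeE k t (wrap (t*k) (i + (t*k - r))),
              hE _ (wrap_pos _ _) (wrap_le (by omega) _), ?_⟩
            rw [rot_edgeE hk ht1 hr (wrap_pos _ _) (wrap_le (by omega) _),
              wrap_wrap_add (by omega), show i + (t*k - r) + r = i + t*k by omega,
              wrap_add_n h1, wrap_eq h1 h2]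
          · have hk4 : k ≠ 3 := by omega
            have hrk : r = k := by rw [hrdef, if_neg hk4]
            rcases Nat.eq_zero_or_pos s with hs0|hs0
            · refine ⟨edgeEij k t (j+(t-1)*k) j, hB j (t-1) hj1 hj2 (by omega), ?_⟩
              have htk : (t-1)*k = t*k - k := by rw [Nat.sub_one_mul]
              rw [rot_edgeEij hk ht1 hr (by omega) hj1 hj2, hrk,
                show j + (t-1)*k + k = j + t*k by omega,
                edgeEij_shift_n (by omega), hs0, Nat.zero_mul, Nat.add_zero]
            · refine ⟨edgeEij k t (j+(s-1)*k) j, hB j (s-1) hj1 hj2 (by omega), ?_⟩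
              have hsk : (s-1)*k = s*k - k := by rw [Nat.sub_one_mul]
              have hks : k ≤ s*k := Nat.le_mul_of_pos_left k hs0
              rw [rot_edgeEij hk ht1 hr (by omega) hj1 hj2, hrk,
                show j + (s-1)*k + k = j + s*k by omega]
        intro F
        constructor
        · exact fun h => fwd F h
        · intro h
          obtain ⟨F', hF', he⟩ := surj _ h
          have := Finset.image_injective (rot k t r hk ht1 hr).injective he
          rwa [← this]
      · intro e
        have h2 : rot k t r hk ht1 hr (0,1) = (0,1) := by rw [e]; rfl
        rw [rot_apply, rotF_apply (by omega) (by omega) (by omega),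
          wrap_eq (by omega) (by omega)] at h2
        have := (Prod.ext_iff.1 h2).2
        omega
    · -- some block missing
      push_neg at hB
      obtain ⟨j, s, hj1, hj2, hs, hBm⟩ := hB
      set i0 := j + s*k with hi0
      have hi01 : 1 ≤ i0 := by omega
      have hi02 : i0 ≤ t*k := by
        have h1 : s*k ≤ (t-1)*k := Nat.mul_le_mul_right k (by omega)
        have h2 : (t-1)*k = t*k - k := by rw [Nat.sub_one_mul]
        omega
      have hXE := (hM _ (hE i0 hi01 hi02)).2
      refine twin_auto (a := (j+1, i0)) (b := (1, i0))
        (hXE ((w_mem_edgeE_iff (by omega)).2 ⟨by omega, rfl⟩))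
        (hXE (u_mem_edgeE_iff.2 rfl))
        (by rw [Ne, Prod.ext_iff]; push_neg; intro h; omega) ?_
      intro F hF
      rcases mem_M.1 (hM F hF).1 with rfl|⟨i',h1',h2',rfl⟩|⟨j',s',hj1',hj2',hs',rfl⟩
      · rw [w_mem_Es_iff (by omega), u_mem_Es_iff]
        constructor
        · rintro ⟨-, h⟩; exact h
        · intro h; exact ⟨by omega, h⟩
      · rw [w_mem_edgeE_iff (by omega), u_mem_edgeE_iff]
        constructor
        · rintro ⟨-, h⟩; exact h
        · intro h; exact ⟨by omega, h⟩
      · refine iff_of_false ?_ (u_notMem_edgeEij hj1')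
        intro ha
        rw [w_mem_edgeEij_iff] at ha
        obtain ⟨hjj, l', hl', hil'⟩ := ha
        have hjj' : j' = j := by omega
        rw [hjj'] at hil' hF
        have hw0 : wrap (t*k) (j + s*k + 0) = wrap (t*k) (j + s'*k + l') := by
          rw [Nat.add_zero, ← hi0, wrap_eq hi01 hi02]
          exact hil'
        have hbi := block_inj hj1 hs (by omega) hs' hl' hw0
        rw [← hbi.1, ← hi0] at hF
        exact hBm hF
  · push_neg at hE
    obtain ⟨i0, h01, h02, habs⟩ := hE
    by_cases hE1 : ∃ i1, 1 ≤ i1 ∧ i1 ≤ t*k ∧ edgeE k t i1 ∈ M'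
    · obtain ⟨i1, h11, h12, hpres⟩ := hE1
      obtain ⟨i, hi1, hi2, hiabs, hipres⟩ := boundary hk ht1 h01 h02 h11 h12 habs hpres
      set m := wrap (t*k) (i+1) with hm
      have hm1 : 1 ≤ m := wrap_pos _ _
      have hm2 : m ≤ t*k := wrap_le (by omega) _
      have hXE := (hM _ hipres).2
      refine twin_auto (a := (0, m)) (b := (1, m))
        (hXE (v_mem_edgeE_iff.2 (Or.inl rfl))) (hXE (u_mem_edgeE_iff.2 rfl))
        (by rw [Ne, Prod.ext_iff]; push_neg; intro h; omega) ?_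
      intro F hF
      rcases mem_M.1 (hM F hF).1 with rfl|⟨i',h1',h2',rfl⟩|⟨j',s',hj1',hj2',hs',rfl⟩
      · rw [v_mem_Es_iff, u_mem_Es_iff]; omega
      · rw [v_mem_edgeE_iff, u_mem_edgeE_iff]
        constructor
        · rintro (h|h)
          · exact h
          · exfalso
            have hii : i' = i := wrap_succ_inj h1' h2' hi1 hi2 (h.symm.trans hm)
            subst hii
            exact hiabs hF
        · intro h; exact Or.inl h
      · exact iff_of_false (v_notMem_edgeEij hj1') (u_notMem_edgeEij hj1')
    · push_neg at hE1
      by_cases hB : ∃ j s, 1 ≤ j ∧ j ≤ k-3 ∧ s < t ∧ edgeEij k t (j+s*k) j ∈ M'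
      · obtain ⟨j, s, hj1, hj2, hs, hBm⟩ := hB
        by_cases h0 : wrap (t*k) (j+s*k+0) = 1
        · refine blocktwin hk ht1 hM hE1 hj1 hj2 hs hBm (l1 := 1) (l2 := 2)
            (by omega) (by omega) (by omega) ?_ ?_
          · intro e
            have := block_inj hj1 hs (by omega : (1:ℕ) < k) hs (by omega : (0:ℕ) < k) (e.trans h0.symm)
            omega
          · intro e
            have := block_inj hj1 hs (by omega : (2:ℕ) < k) hs (by omega : (0:ℕ) < k) (e.trans h0.symm)
            omega
        · by_cases h1 : wrap (t*k) (j+s*k+1) = 1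
          · refine blocktwin hk ht1 hM hE1 hj1 hj2 hs hBm (l1 := 0) (l2 := 2)
              (by omega) (by omega) (by omega) h0 ?_
            intro e
            have := block_inj hj1 hs (by omega : (2:ℕ) < k) hs (by omega : (1:ℕ) < k) (e.trans h1.symm)
            omega
          · exact blocktwin hk ht1 hM hE1 hj1 hj2 hs hBm (l1 := 0) (l2 := 1)
              (by omega) (by omega) (by omega) h0 h1
      · have hMs : ∀ F ∈ M', F = Es k := by
          intro F hF
          rcases mem_M.1 (hM F hF).1 with rfl|⟨i',h1',h2',rfl⟩|⟨j',s',hj1',hj2',hs',rfl⟩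
          · rfl
          · exact absurd hF (hE1 i' h1' h2')
          · exact absurd hF (fun h => hB ⟨j', s', hj1', hj2', hs', h⟩)
        by_cases hEsM : Es k ∈ M'
        · have hXE := (hM _ hEsM).2
          refine twin_auto (a := ((0:ℕ),(1:ℕ))) (b := ((1:ℕ),(1:ℕ)))
            (hXE (v_mem_Es_iff.2 (Or.inl rfl))) (hXE (u_mem_Es_iff.2 rfl))
            (by rw [Ne, Prod.ext_iff]; push_neg; intro h; omega) ?_
          intro F hF
          rw [hMs F hF, v_mem_Es_iff, u_mem_Es_iff]
          omega
        · obtain ⟨a, ha, b, hb, hab⟩ := Finset.one_lt_card.mp (show 1 < X'.card by omega)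
          refine twin_auto ha hb hab ?_
          intro F hF
          have := hMs F hF
          subst this
          exact absurd hF hEsM

end Part2
section Class
variable {k t : ℕ}

lemma deg_v_ge2 (hk : 3 ≤ k) (ht : 1 ≤ t) {m : ℕ} (h1 : 1 ≤ m) (h2 : m ≤ t*k) :
    2 ≤ deg k t (0,m) := by
  rcases Nat.eq_or_lt_of_le h1 with h|h
  · rw [← h, deg_v1 hk ht]; omega
  · rw [deg_v hk ht (by omega) h2]

lemma deg_w_ge2 (hk : 3 ≤ k) (ht : 1 ≤ t) {c m : ℕ} (hc : 2 ≤ c) (hc2 : c ≤ k-2)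
    (h1 : 1 ≤ m) (h2 : m ≤ t*k) : 2 ≤ deg k t (c,m) := by
  rw [deg_w hk ht hc hc2 h1 h2]
  split <;> omega

lemma block_member_deg' (hk : 3 ≤ k) (ht : 1 ≤ t) {i j : ℕ} (hj : 1 ≤ j) (hj2 : j ≤ k - 3)
    {p : ℕ × ℕ} (hp : p ∈ edgeEij k t i j) : deg k t p ≠ 1 := by
  have := block_member_deg hk ht hj hj2 hp
  omega

lemma deg3_in_edgeE (hk : 3 ≤ k) (ht : 1 ≤ t) {i : ℕ} {p : ℕ × ℕ}
    (hi1 : 2 ≤ i) (hi2 : i ≤ t*k) (hp : p ∈ edgeE k t i) (hd : deg k t p = 3) :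
    i = t*k ∧ p = (0,1) := by
  have hn := hn_ge hk ht
  rcases mem_edgeE.1 hp with rfl|rfl|rfl|⟨h1,h2,h3⟩
  · rw [deg_v hk ht hi1 hi2] at hd; omega
  · rw [deg_u hk ht hi1 hi2] at hd; omega
  · have hm1 : 1 ≤ wrap (t*k) (i+1) := wrap_pos _ _
    have hm2 : wrap (t*k) (i+1) ≤ t*k := wrap_le (by omega) _
    rcases Nat.eq_or_lt_of_le hm1 with h|h
    · have := (wrap_succ_eq_one_iff (by omega) (by omega) hi2).1 h.symm
      exact ⟨this, by rw [← h]⟩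
    · rw [deg_v hk ht (by omega) hm2] at hd; omega
  · obtain ⟨c, m⟩ := p
    simp only at h1 h2 h3
    subst h3
    rw [deg_w hk ht h1 h2 (by omega) hi2, if_neg (by omega)] at hd
    omega

lemma deg2_in_Es (hk : 3 ≤ k) (ht : 1 ≤ t) {p : ℕ × ℕ}
    (hp : p ∈ Es k) (hd : deg k t p = 2) : p = (1,1) := by
  have hn := hn_ge hk ht
  rcases mem_Es.1 hp with rfl|rfl|rfl|⟨h1,h2,h3⟩
  · rw [deg_v1 hk ht] at hd; omega
  · rfl
  · rw [deg_x hk ht] at hd; omega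
  · obtain ⟨c, m⟩ := p
    simp only at h1 h2 h3
    subst h3
    rw [deg_w hk ht h1 h2 (by omega) (by omega), if_pos rfl] at hd
    omega

lemma deg3_in_edgeE1 (hk : 3 ≤ k) (ht : 1 ≤ t) {p : ℕ × ℕ}
    (hp : p ∈ edgeE k t 1) (hd : deg k t p = 3) :
    p = (0,1) ∨ (2 ≤ p.1 ∧ p.1 ≤ k-2 ∧ p.2 = 1) := by
  have hn := hn_ge hk ht
  rcases mem_edgeE.1 hp with rfl|rfl|rfl|⟨h1,h2,h3⟩
  · exact Or.inl rfl
  · rw [deg_u1 hk ht] at hd; omega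
  · rw [wrap_eq (by omega) (by omega)] at hd ⊢
    rw [deg_v hk ht (by omega) (by omega)] at hd; omega
  · exact Or.inr ⟨h1, h2, h3⟩

lemma deg1_in_edgeE (hk : 3 ≤ k) (ht : 1 ≤ t) {i : ℕ} {p : ℕ × ℕ}
    (hi1 : 2 ≤ i) (hi2 : i ≤ t*k) (hp : p ∈ edgeE k t i) (hd : deg k t p = 1) :
    p = (1,i) := by
  have hn := hn_ge hk ht
  rcases mem_edgeE.1 hp with rfl|rfl|rfl|⟨h1,h2,h3⟩
  · have := deg_v_ge2 hk ht (by omega) hi2; omega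
  · rfl
  · have := deg_v_ge2 hk ht (wrap_pos _ _) (wrap_le (by omega) (i+1)); omega
  · obtain ⟨c, m⟩ := p
    simp only at h1 h2 h3
    subst h3
    have := deg_w_ge2 hk ht h1 h2 (by omega) hi2; omega

lemma resolve_pair {β : Type*} [DecidableEq β] {g : β → β} (hg : Function.Injective g)
    {A B C D : β} (h : ({A,B} : Finset β).image g = {C,D}) (hA : g A = C)
    (hAB : A ≠ B) : g B = D := by
  have hmem : g B ∈ ({C,D} : Finset β) := h ▸ Finset.mem_image_of_mem g (by simp)
  rcases Finset.mem_insert.1 hmem with h'|h'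
  · exact absurd (hg (h'.trans hA.symm)) (fun e => hAB e.symm)
  · exact Finset.mem_singleton.1 h'

lemma resolve_triple {β : Type*} [DecidableEq β] {g : β → β} (hg : Function.Injective g)
    {A B C D E F : β} (h : ({A,B,C} : Finset β).image g = {D,E,F}) (hA : g A = D)
    (hB : g B = E) (hCA : C ≠ A) (hCB : C ≠ B) : g C = F := by
  have hmem : g C ∈ ({D,E,F} : Finset β) := h ▸ Finset.mem_image_of_mem g (by simp)
  rcases Finset.mem_insert.1 hmem with h'|h'
  · exact absurd (hg (h'.trans hA.symm)) hCA
  rcases Finset.mem_insert.1 h' with h''|h''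
  · exact absurd (hg (h''.trans hB.symm)) hCB
  · exact Finset.mem_singleton.1 h''

end Class
section Part1
variable {k t : ℕ} {σ : Equiv.Perm (ℕ × ℕ)}

lemma filt_elem_image (hA : IsAuto (GcircVerts k t) (GcircEdges k t) σ) {v : ℕ×ℕ}
    {F : Finset (ℕ×ℕ)} (hF : F ∈ filt k t v) : F.image σ ∈ filt k t (σ v) := by
  rw [← filt_map hA]
  exact Finset.mem_image_of_mem _ hF

lemma fix_x (hk : 3 ≤ k) (ht : 1 ≤ t) (hA : IsAuto (GcircVerts k t) (GcircEdges k t) σ) :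
    σ (0,0) = (0,0) := by
  have hn := hn_ge hk ht
  have hx : ((0,0):ℕ×ℕ) ∈ GcircVerts k t := (mem_X hk).2 (Or.inl rfl)
  have hd1 : deg k t (σ (0,0)) = 1 := by rw [deg_map hA, deg_x hk ht]
  have hmem := sigma_mem_X hA hx
  rcases deg_table hk ht hmem with ⟨h,-⟩|⟨-,hd⟩|⟨-,hd⟩|⟨c,-,-,-,hd⟩|⟨i,-,-,-,hd⟩|
    ⟨i,hi1,hi2,h,hd⟩|⟨c,i,-,-,-,-,-,hd⟩
  · exact h
  · omega
  · omega
  · omega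
  · omega
  · -- σ x = (1,i), 2 ≤ i
    exfalso
    have hEsf : Es k ∈ filt k t (0,0) := mem_filt.2 ⟨Es_mem_M, x_mem_Es⟩
    have h5 := filt_elem_image hA hEsf
    rw [h, filt_u hk ht hi1 hi2, Finset.mem_singleton] at h5
    have hv1 : σ (0,1) ∈ edgeE k t i :=
      h5 ▸ Finset.mem_image_of_mem _ (v_mem_Es_iff.2 (Or.inl rfl))
    have hdv1 : deg k t (σ (0,1)) = 3 := by rw [deg_map hA, deg_v1 hk ht]
    obtain ⟨hin, hv1e⟩ := deg3_in_edgeE hk ht hi1 hi2 hv1 hdv1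
    rcases Nat.lt_or_ge k 4 with hk3|hk4
    · -- k = 3
      have hu1 : σ (1,1) ∈ edgeE k t i :=
        h5 ▸ Finset.mem_image_of_mem _ (u_mem_Es_iff.2 rfl)
      have hdu1 : deg k t (σ (1,1)) = 2 := by rw [deg_map hA, deg_u1 hk ht]
      have hu1e : σ (1,1) = (0,i) := by
        rcases mem_edgeE.1 hu1 with e|e|e|⟨e1,e2,e3⟩
        · exact e
        · rw [e, deg_u hk ht hi1 hi2] at hdu1; omega
        · have hw : wrap (t*k) (i+1) = 1 := (wrap_succ_eq_one_iff (by omega) (by omega) hi2).2 hin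
          rw [e, hw, deg_v1 hk ht] at hdu1; omega
        · omega
      -- filt (1,1) maps to filt (0,n)
      have hmap := filt_map hA (1,1)
      rw [filt_u1 hk ht, hu1e, hin, filt_v hk ht (by omega) (le_refl _)] at hmap
      rw [hin] at h5
      have hE1img : (edgeE k t 1).image σ = edgeE k t (t*k - 1) := by
        rw [Finset.pair_comm (edgeE k t (t*k - 1)) (edgeE k t (t*k))] at hmap
        exact resolve_pair (Finset.image_injective σ.injective)
          hmap h5 (Es_ne_edgeE (by omega))
      have hv1' : σ (0,1) ∈ edgeE k t (t*k - 1) :=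
        hE1img ▸ Finset.mem_image_of_mem _ (v_mem_edgeE_iff.2 (Or.inl rfl))
      rw [hv1e] at hv1'
      rcases v_mem_edgeE_iff.1 hv1' with e|e
      · omega
      · rw [show t*k - 1 + 1 = t*k by omega, wrap_eq (by omega) (le_refl _)] at e
        omega
    · -- k ≥ 4
      have h21' : σ (2,1) ∈ edgeE k t i :=
        h5 ▸ Finset.mem_image_of_mem _ ((w_mem_Es_iff (le_refl 2)).2 ⟨by omega, rfl⟩)
      have hd21 : deg k t (σ (2,1)) = 3 := by
        rw [deg_map hA, deg_w hk ht (le_refl 2) (by omega) (by omega) (by omega), if_pos rfl]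
      obtain ⟨-, h21e⟩ := deg3_in_edgeE hk ht hi1 hi2 h21' hd21
      have := σ.injective (h21e.trans hv1e.symm)
      rw [Prod.ext_iff] at this
      exact absurd this.1 (by omega)
  · omega

lemma Es_image (hk : 3 ≤ k) (ht : 1 ≤ t) (hA : IsAuto (GcircVerts k t) (GcircEdges k t) σ) :
    (Es k).image σ = Es k := by
  have h1 : (Es k).image σ ∈ GcircEdges k t := (hA.2 (Es k)).1 Es_mem_M
  have h2 : ((0,0):ℕ×ℕ) ∈ (Es k).image σ := by
    rw [← fix_x hk ht hA]
    exact Finset.mem_image_of_mem _ x_mem_Es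
  have h3 : (Es k).image σ ∈ filt k t (0,0) := mem_filt.2 ⟨h1, h2⟩
  rwa [filt_x hk ht, Finset.mem_singleton] at h3

lemma fix_u1 (hk : 3 ≤ k) (ht : 1 ≤ t) (hA : IsAuto (GcircVerts k t) (GcircEdges k t) σ) :
    σ (1,1) = (1,1) := by
  have h1 : σ (1,1) ∈ Es k :=
    Es_image hk ht hA ▸ Finset.mem_image_of_mem _ (u_mem_Es_iff.2 rfl)
  have h2 : deg k t (σ (1,1)) = 2 := by rw [deg_map hA, deg_u1 hk ht]
  exact deg2_in_Es hk ht h1 h2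

lemma E1_image (hk : 3 ≤ k) (ht : 1 ≤ t) (hA : IsAuto (GcircVerts k t) (GcircEdges k t) σ) :
    (edgeE k t 1).image σ = edgeE k t 1 := by
  have hmap := filt_map hA (1,1)
  rw [fix_u1 hk ht hA, filt_u1 hk ht] at hmap
  exact resolve_pair (Finset.image_injective σ.injective) hmap
    (Es_image hk ht hA) (Es_ne_edgeE (by omega))

lemma fix_v1 (hk : 3 ≤ k) (ht : 1 ≤ t) (hA : IsAuto (GcircVerts k t) (GcircEdges k t) σ) :
    σ (0,1) = (0,1) := by
  have hn := hn_ge hk ht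
  have h1 : σ (0,1) ∈ edgeE k t 1 :=
    E1_image hk ht hA ▸ Finset.mem_image_of_mem _ (v_mem_edgeE_iff.2 (Or.inl rfl))
  have h2 : deg k t (σ (0,1)) = 3 := by rw [deg_map hA, deg_v1 hk ht]
  rcases deg3_in_edgeE1 hk ht h1 h2 with h|⟨hc1, hc2, hc3⟩
  · exact h
  · exfalso
    have hp : σ (0,1) = ((σ (0,1)).1, 1) := by rw [Prod.ext_iff]; exact ⟨rfl, hc3⟩
    obtain ⟨s, hs, hmemB, hfilt⟩ := filt_w hk ht hc1 hc2 (le_refl 1) (by omega)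
    rw [if_pos rfl] at hfilt
    have hmap := filt_map hA (0,1)
    rw [hp, hfilt, filt_v1 hk ht] at hmap
    have hEn : (edgeE k t (t*k)).image σ
        = edgeEij k t ((σ (0,1)).1 - 1 + s*k) ((σ (0,1)).1 - 1) :=
      resolve_triple (Finset.image_injective σ.injective) hmap
        (Es_image hk ht hA) (E1_image hk ht hA)
        (fun e => Es_ne_edgeE (show 1 ≤ t*k by omega) e.symm)
        (fun e => absurd (edgeE_inj e) (by omega))
    have hun : σ (1, t*k) ∈ edgeEij k t ((σ (0,1)).1 - 1 + s*k) ((σ (0,1)).1 - 1) :=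
      hEn ▸ Finset.mem_image_of_mem _ (u_mem_edgeE_iff.2 rfl)
    have hd : deg k t (σ (1, t*k)) = 1 := by
      rw [deg_map hA, deg_u hk ht (by omega) (le_refl _)]
    exact block_member_deg' hk ht (by omega) (by omega) hun hd

lemma En_image (hk : 3 ≤ k) (ht : 1 ≤ t) (hA : IsAuto (GcircVerts k t) (GcircEdges k t) σ) :
    (edgeE k t (t*k)).image σ = edgeE k t (t*k) := by
  have hn := hn_ge hk ht
  have hmap := filt_map hA (0,1)
  rw [fix_v1 hk ht hA, filt_v1 hk ht] at hmap
  exact resolve_triple (Finset.image_injective σ.injective) hmap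
    (Es_image hk ht hA) (E1_image hk ht hA)
    (fun e => Es_ne_edgeE (show 1 ≤ t*k by omega) e.symm)
    (fun e => absurd (edgeE_inj e) (by omega))

end Part1
section Part1b
variable {k t : ℕ} {σ : Equiv.Perm (ℕ × ℕ)}

lemma chain (hk : 3 ≤ k) (ht : 1 ≤ t) (hA : IsAuto (GcircVerts k t) (GcircEdges k t) σ) :
    ∀ i, 1 ≤ i → i ≤ t*k →
      (edgeE k t i).image σ = edgeE k t i ∧ σ (0,i) = (0,i) ∧ σ (1,i) = (1,i) := by
  have hn := hn_ge hk ht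
  intro i
  induction i with
  | zero => omega
  | succ m IH =>
    intro h1 h2
    rcases Nat.eq_zero_or_pos m with hm0|hm0
    · subst hm0
      exact ⟨E1_image hk ht hA, fix_v1 hk ht hA, fix_u1 hk ht hA⟩
    obtain ⟨hEim, hvm, hum⟩ := IH hm0 (by omega)
    have hwi : wrap (t*k) (m+1) = m+1 := wrap_eq (by omega) h2
    have hv : σ (0, m+1) ∈ edgeE k t m := by
      rw [← hEim]
      exact Finset.mem_image_of_mem _ (v_mem_edgeE_iff.2 (Or.inr hwi.symm))
    have hveq : σ (0, m+1) = (0, m+1) := by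
      rcases mem_edgeE.1 hv with e|e|e|⟨e1,e2,e3⟩
      · rw [← hvm] at e
        have := σ.injective e
        rw [Prod.ext_iff] at this; omega
      · rw [← hum] at e
        have := σ.injective e
        rw [Prod.ext_iff] at this; omega
      · rwa [hwi] at e
      · exfalso
        have hp : σ (0,m+1) = ((σ (0,m+1)).1, m) := by rw [Prod.ext_iff]; exact ⟨rfl, e3⟩
        obtain ⟨s, hs, hmemB, hfilt⟩ := filt_w hk ht e1 e2 hm0 (by omega)
        have hmap := filt_map hA (0, m+1)
        rcases Nat.eq_or_lt_of_le hm0 with hm1|hm1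
        · rw [if_pos hm1.symm] at hfilt
          rw [hp, hfilt, filt_v hk ht (by omega) h2] at hmap
          have hcl : (({edgeE k t (m+1-1), edgeE k t (m+1)} : Finset _).image
              (Finset.image σ)).card = 2 := by
            rw [Finset.card_image_of_injective _ (Finset.image_injective σ.injective),
              card_pair' (fun e => by have := edgeE_inj e; omega)]
          rw [hmap, card_triple (Es_ne_edgeE (by omega)) Es_ne_edgeEij
            (edgeE_ne_edgeEij (by omega))] at hcl
          omega
        · rw [if_neg (by omega)] at hfilt
          rw [hp, hfilt, filt_v hk ht (by omega) h2, Nat.add_sub_cancel] at hmap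
          have hE2 : (edgeE k t (m+1)).image σ
              = edgeEij k t ((σ (0,m+1)).1 - 1 + s*k) ((σ (0,m+1)).1 - 1) :=
            resolve_pair (Finset.image_injective σ.injective) hmap hEim
              (fun e => by have := edgeE_inj e; omega)
          have hu2 : σ (1, m+1) ∈ edgeEij k t ((σ (0,m+1)).1 - 1 + s*k) ((σ (0,m+1)).1 - 1) :=
            hE2 ▸ Finset.mem_image_of_mem _ (u_mem_edgeE_iff.2 rfl)
          have hd : deg k t (σ (1, m+1)) = 1 := by
            rw [deg_map hA, deg_u hk ht (by omega) h2]
          exact block_member_deg' hk ht (by omega) (by omega) hu2 hd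
    have hEi : (edgeE k t (m+1)).image σ = edgeE k t (m+1) := by
      have hmap := filt_map hA (0, m+1)
      rw [hveq, filt_v hk ht (by omega) h2, Nat.add_sub_cancel] at hmap
      exact resolve_pair (Finset.image_injective σ.injective) hmap hEim
        (fun e => by have := edgeE_inj e; omega)
    have hu : σ (1, m+1) ∈ edgeE k t (m+1) :=
      hEi ▸ Finset.mem_image_of_mem _ (u_mem_edgeE_iff.2 rfl)
    have hdu : deg k t (σ (1,m+1)) = 1 := by rw [deg_map hA, deg_u hk ht (by omega) h2]
    exact ⟨hEi, hveq, deg1_in_edgeE hk ht (by omega) h2 hu hdu⟩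

lemma fix_w (hk : 3 ≤ k) (ht : 1 ≤ t) (ht2 : k - 2 ≤ t)
    (hA : IsAuto (GcircVerts k t) (GcircEdges k t) σ)
    {c i : ℕ} (hc1 : 2 ≤ c) (hc2 : c ≤ k-2) (hi1 : 1 ≤ i) (hi2 : i ≤ t*k) :
    σ (c,i) = (c,i) := by
  have hn := hn_ge hk ht
  have hk4 : 4 ≤ k := by omega
  have ht4 : 2 ≤ t := by omega
  have h2k : 2*k ≤ t*k := Nat.mul_le_mul_right k ht4
  have hch := chain hk ht hA
  have hfiber : ∀ c' m, 2 ≤ c' → c' ≤ k-2 → 1 ≤ m → m ≤ t*k →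
      (σ (c',m)).2 = m ∧ 2 ≤ (σ (c',m)).1 ∧ (σ (c',m)).1 ≤ k-2 := by
    intro c' m hc1' hc2' hm1 hm2
    obtain ⟨hEm, hvm, hum⟩ := hch m hm1 hm2
    have hmem : σ (c',m) ∈ edgeE k t m :=
      hEm ▸ Finset.mem_image_of_mem _ ((w_mem_edgeE_iff hc1').2 ⟨hc2', rfl⟩)
    rcases mem_edgeE.1 hmem with e|e|e|⟨e1,e2,e3⟩
    · rw [← hvm] at e
      have := σ.injective e; rw [Prod.ext_iff] at this; omega
    · rw [← hum] at e
      have := σ.injective e; rw [Prod.ext_iff] at this; omega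
    · have hw1 : 1 ≤ wrap (t*k) (m+1) := wrap_pos _ _
      have hw2 : wrap (t*k) (m+1) ≤ t*k := wrap_le (by omega) _
      obtain ⟨-, hvw, -⟩ := hch _ hw1 hw2
      rw [← hvw] at e
      have := σ.injective e; rw [Prod.ext_iff] at this; omega
    · exact ⟨e3, e1, e2⟩
  obtain ⟨hfib2, hfc1, hfc2⟩ := hfiber c i hc1 hc2 hi1 hi2
  have hp : σ (c,i) = ((σ (c,i)).1, i) := by rw [Prod.ext_iff]; exact ⟨rfl, hfib2⟩
  obtain ⟨s, hs, hmemB, hfilt⟩ := filt_w hk ht hc1 hc2 hi1 hi2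
  obtain ⟨s', hs', hmemB', hfilt'⟩ := filt_w hk ht hfc1 hfc2 hi1 hi2
  have hmap := filt_map hA (c,i)
  rw [hp, hfilt, hfilt'] at hmap
  have hBimg : (edgeEij k t ((c-1)+s*k) (c-1)).image σ
      = edgeEij k t (((σ (c,i)).1-1)+s'*k) ((σ (c,i)).1-1) := by
    rcases Nat.eq_or_lt_of_le hi1 with h|h
    · rw [if_pos h.symm, if_pos h.symm] at hmap
      exact resolve_triple (Finset.image_injective σ.injective) hmap
        (Es_image hk ht hA) (E1_image hk ht hA)
        (fun e => Es_ne_edgeEij e.symm)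
        (fun e => edgeE_ne_edgeEij (by omega) e.symm)
    · rw [if_neg (by omega), if_neg (by omega)] at hmap
      obtain ⟨hEi, -, -⟩ := hch i hi1 hi2
      exact resolve_pair (Finset.image_injective σ.injective) hmap hEi
        (edgeE_ne_edgeEij (by omega))
  -- start index arithmetic
  have hsub1 : (t-1)*k = t*k - k := Nat.sub_one_mul t k
  have hsk : s*k ≤ (t-1)*k := Nat.mul_le_mul_right k (by omega)
  have hsk' : s'*k ≤ (t-1)*k := Nat.mul_le_mul_right k (by omega)
  have ha1 : 1 ≤ (c-1)+s*k := by omega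
  have ha2 : (c-1)+s*k ≤ t*k := by omega
  have ha1' : 1 ≤ ((σ (c,i)).1-1)+s'*k := by omega
  have ha2' : ((σ (c,i)).1-1)+s'*k ≤ t*k := by omega
  -- forward member
  have hmem1 : ((c, (c-1)+s*k) : ℕ×ℕ) ∈ edgeEij k t ((c-1)+s*k) (c-1) :=
    w_mem_edgeEij_iff.2 ⟨by omega, 0, by omega, by rw [Nat.add_zero, wrap_eq ha1 ha2]⟩
  have h1 : σ (c, (c-1)+s*k) ∈ edgeEij k t (((σ (c,i)).1-1)+s'*k) ((σ (c,i)).1-1) :=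
    hBimg ▸ Finset.mem_image_of_mem _ hmem1
  obtain ⟨hfa2, -, -⟩ := hfiber c ((c-1)+s*k) hc1 hc2 ha1 ha2
  have hpa : σ (c,(c-1)+s*k) = ((σ (c,(c-1)+s*k)).1, (c-1)+s*k) := by
    rw [Prod.ext_iff]; exact ⟨rfl, hfa2⟩
  rw [hpa, w_mem_edgeEij_iff] at h1
  obtain ⟨-, l0, hl0, he0⟩ := h1
  -- backward member
  have hmem2 : (((σ (c,i)).1, ((σ (c,i)).1-1)+s'*k) : ℕ×ℕ)
      ∈ edgeEij k t (((σ (c,i)).1-1)+s'*k) ((σ (c,i)).1-1) :=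
    w_mem_edgeEij_iff.2 ⟨by omega, 0, by omega, by rw [Nat.add_zero, wrap_eq ha1' ha2']⟩
  rw [← hBimg] at hmem2
  obtain ⟨y, hy, hyeq⟩ := Finset.mem_image.1 hmem2
  obtain ⟨l1, hl1, rfl⟩ := mem_edgeEij.1 hy
  have hwb1 : 1 ≤ wrap (t*k) ((c-1)+s*k+l1) := wrap_pos _ _
  have hwb2 : wrap (t*k) ((c-1)+s*k+l1) ≤ t*k := wrap_le (by omega) _
  obtain ⟨hyb2, -, -⟩ := hfiber (c-1+1) _ (by omega) (by omega) hwb1 hwb2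
  have he1 : ((σ (c,i)).1-1)+s'*k = wrap (t*k) ((c-1)+s*k+l1) := by
    rw [← hyb2, hyeq]
  -- arithmetic: l0 = l1 = 0, equal starts
  have hq0 : ((((σ (c,i)).1-1)+s'*k) - 1 + l0) % (t*k) = ((c-1)+s*k) - 1 := by
    have h7 := he0
    rw [wrap, show (((σ (c,i)).1-1)+s'*k) + l0 - 1
      = ((((σ (c,i)).1-1)+s'*k) - 1 + l0) by omega] at h7
    omega
  have hq1 : ((((c-1)+s*k) - 1) + l1) % (t*k) = (((σ (c,i)).1-1)+s'*k) - 1 := by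
    have h7 := he1
    rw [wrap, show (c-1)+s*k+l1 - 1 = (((c-1)+s*k) - 1) + l1 by omega] at h7
    omega
  have hkey : ((((c-1)+s*k) - 1) + (l1 + l0)) % (t*k) = (((c-1)+s*k) - 1) := by
    rw [show (((c-1)+s*k) - 1) + (l1 + l0) = ((((c-1)+s*k) - 1) + l1) + l0 by omega]
    calc (((((c-1)+s*k) - 1) + l1) + l0) % (t*k)
        = (((((c-1)+s*k) - 1) + l1) % (t*k) + l0) % (t*k) := by
          rw [Nat.mod_add_mod]
    _ = ((c-1)+s*k) - 1 := by rw [hq1]; exact hq0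
  have hl10 : l1 + l0 = 0 := by
    have h5 : (((c-1)+s*k) - 1 + (l1+l0)) % (t*k) = (((c-1)+s*k) - 1) % (t*k) := by
      rw [hkey, Nat.mod_eq_of_lt (by omega)]
    have h6 : (l1 + l0) % (t*k) = 0 % (t*k) :=
      Nat.ModEq.add_left_cancel' (((c-1)+s*k) - 1) h5
    rw [Nat.zero_mod, Nat.mod_eq_of_lt (by omega)] at h6
    exact h6
  have haa : (c-1)+s*k = ((σ (c,i)).1-1)+s'*k := by
    have : l0 = 0 := by omega
    rw [this, Nat.add_zero] at he0
    rw [he0, wrap_eq ha1' ha2']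
  -- conclude c components equal
  have hmodk : (c-1) % k = ((σ (c,i)).1-1) % k := by
    have e1 : ((c-1)+s*k) % k = (c-1) % k := Nat.add_mul_mod_self_right _ _ _
    have e2 : (((σ (c,i)).1-1)+s'*k) % k = ((σ (c,i)).1-1) % k :=
      Nat.add_mul_mod_self_right _ _ _
    rw [← e1, ← e2, haa]
  rw [Nat.mod_eq_of_lt (by omega), Nat.mod_eq_of_lt (by omega)] at hmodk
  have : (σ (c,i)).1 = c := by omega
  rw [hp, this]

lemma part1 (hk : 3 ≤ k) (ht2 : k - 2 ≤ t)
    (hA : IsAuto (GcircVerts k t) (GcircEdges k t) σ) : σ = 1 := by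
  have ht : 1 ≤ t := by omega
  apply Equiv.ext
  intro p
  rw [Equiv.Perm.one_apply]
  by_cases hp : p ∈ GcircVerts k t
  · rcases (mem_X hk).1 hp with h|⟨h1,h2,h3⟩
    · rw [h]; exact fix_x hk ht hA
    · obtain ⟨c, i⟩ := p
      simp only at h1 h2 h3
      rcases Nat.lt_or_ge c 2 with hc|hc
      · interval_cases c
        · exact (chain hk ht hA i h2 h3).2.1
        · exact (chain hk ht hA i h2 h3).2.2
      · exact fix_w hk ht ht2 hA hc h1 h2 h3
  · exact hA.1 p hp

end Part1b

/-- For k ≥ 3 and t ≥ k−2: (1) `G°_{k,t}` is asymmetric; (2) every proper k-subgraph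
of `G°_{k,t}` with at least two vertices has a non-identical automorphism. -/
theorem stmt_19 (k t : ℕ) (hk : 3 ≤ k) (ht : k - 2 ≤ t) :
    (∀ σ : Equiv.Perm (ℕ × ℕ), IsAuto (GcircVerts k t) (GcircEdges k t) σ → σ = 1) ∧
    (∀ (X' : Finset (ℕ × ℕ)) (M' : Finset (Finset (ℕ × ℕ))),
      X' ⊆ GcircVerts k t → (∀ E ∈ M', E ∈ GcircEdges k t ∧ E ⊆ X') →
      2 ≤ X'.card → ¬(X' = GcircVerts k t ∧ M' = GcircEdges k t) →
      ∃ σ : Equiv.Perm (ℕ × ℕ), IsAuto X' M' σ ∧ σ ≠ 1) := by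
  constructor
  · intro σ hA
    exact part1 hk ht hA
  · intro X' M' hsub hM hcard hne
    exact part2 hk ht X' M' hsub hM hcard hne
end
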